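/- arXiv:math/0501243 — 9 statements merged into one kernel-verified Lean document; each statement's English description precedes it below -/
import Mathlib

section
/- Let E be a field and L a finite extension of E which is the compositum of two intermediate extensions L₁ and L₂ of E whose degrees [L₁:E] and [L₂:E] are relatively prime. Then the norm group N(L/E) equals the intersection N(L₁/E) ∩ N(L₂/E). -/
/-!
Transitivity of the norm gives `N(L/E) ⊆ N(Lᵢ/E)`. Conversely, coprime degrees make `L₁` and
`L₂` linearly disjoint, so `[L : L₁] = [L₂ : E]` and `[L : L₂] = [L₁ : E]`. If
`x = N_{L₁/E}(a) = N_{L₂/E}(b)`, then `N_{L/E}(a) = x ^ [L₂ : E]` and `N_{L/E}(b) = x ^ [L₁ : E]`,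
and a Bézout combination of these two exponents recovers `x` inside `N(L/E)`.
-/

open Module

/-- The norm group `N(L/E)`: the image of the norm map `L* → E*`, as a subgroup of `Eˣ`. -/
noncomputable def normGroup (E L : Type*) [Field E] [Field L] [Algebra E L] : Subgroup Eˣ :=
  (Units.map (Algebra.norm E : L →* E)).range

theorem Subgroup.mem_of_pow_mem_of_coprime {G : Type*} [Group G] (H : Subgroup G) {x : G}
    {m n : ℕ} (hmn : m.Coprime n) (hm : x ^ m ∈ H) (hn : x ^ n ∈ H) : x ∈ H := by
  have hx : x = (x ^ m) ^ m.gcdA n * (x ^ n) ^ m.gcdB n := by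
    rw [← zpow_natCast, ← zpow_natCast x n, ← zpow_mul, ← zpow_mul, ← zpow_add,
      ← Nat.gcd_eq_gcd_ab, hmn, Nat.cast_one, zpow_one]
  rw [hx]
  exact mul_mem (zpow_mem hm _) (zpow_mem hn _)

section Tower

variable {E K L : Type*} [Field E] [Field K] [Field L] [Algebra E K] [Algebra K L] [Algebra E L]
  [IsScalarTower E K L]

theorem normGroup_le_of_isScalarTower : normGroup E L ≤ normGroup E K := by
  rintro _ ⟨y, rfl⟩
  refine ⟨Units.map (Algebra.norm K : L →* K) y, Units.ext ?_⟩
  exact Algebra.norm_norm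

theorem pow_finrank_mem_normGroup {x : Eˣ} (hx : x ∈ normGroup E K) :
    x ^ finrank K L ∈ normGroup E L := by
  obtain ⟨a, rfl⟩ := hx
  refine ⟨Units.map (algebraMap K L : K →* L) a, Units.ext ?_⟩
  simp only [Units.coe_map, MonoidHom.coe_coe, Units.val_pow_eq_pow_val]
  rw [← Algebra.norm_norm (S := K), Algebra.norm_algebraMap, map_pow]

end Tower

theorem IntermediateField.finrank_eq_finrank_of_sup_eq_top_of_coprime {E L : Type*} [Field E]
    [Field L] [Algebra E L] [FiniteDimensional E L] {L₁ L₂ : IntermediateField E L}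
    (hcomp : L₁ ⊔ L₂ = ⊤) (hcop : (finrank E L₁).Coprime (finrank E L₂)) :
    finrank L₁ L = finrank E L₂ := by
  have hsup : finrank E L₁ * finrank E L₂ = finrank E L := by
    rw [← (LinearDisjoint.of_finrank_coprime hcop).finrank_sup, hcomp, finrank_top']
  rw [← finrank_mul_finrank E L₁ L] at hsup
  exact (Nat.eq_of_mul_eq_mul_left finrank_pos hsup).symm

theorem stmt_0 {E L : Type*} [Field E] [Field L] [Algebra E L] [FiniteDimensional E L]
    (L₁ L₂ : IntermediateField E L) (hcomp : L₁ ⊔ L₂ = ⊤)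
    (hcop : Nat.Coprime (Module.finrank E L₁) (Module.finrank E L₂)) :
    normGroup E L = normGroup E L₁ ⊓ normGroup E L₂ := by
  refine le_antisymm (le_inf normGroup_le_of_isScalarTower normGroup_le_of_isScalarTower) ?_
  rintro x ⟨hx₁, hx₂⟩
  have hpow₂ : x ^ finrank E L₂ ∈ normGroup E L := by
    rw [← IntermediateField.finrank_eq_finrank_of_sup_eq_top_of_coprime hcomp hcop]
    exact pow_finrank_mem_normGroup hx₁
  have hpow₁ : x ^ finrank E L₁ ∈ normGroup E L := by
    rw [← IntermediateField.finrank_eq_finrank_of_sup_eq_top_of_coprime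
      (sup_comm L₁ L₂ ▸ hcomp) hcop.symm]
    exact pow_finrank_mem_normGroup hx₂
  exact (normGroup E L).mem_of_pow_mem_of_coprime hcop hpow₁ hpow₂
end

section
/- Let M/E be a finite Galois extension with nilpotent Galois group, and R an intermediate field with R ≠ E. For each prime p dividing [R:E], let M_p be the maximal p-extension of E inside M and R_p = R ∩ M_p. Then R equals the compositum of the fields R_p over all primes p dividing [R:E], and [R:E] = ∏_p [R_p:E]. -/
/-!
Write `G = Gal(M/E)` and `A` for the fixing group of `R`, so `[R : E] = [G : A]`. Being nilpotent,
`G` has for every prime `p` a normal subgroup `Q` of `p`-power index and order prime to `p`; its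
fixed field has `p`-power degree, hence lies in `M_p`. The fixing group of `R ∩ Fix(Q)` is `A ⊔ Q`,
and `[A ⊔ Q : A] = [Q : A ⊓ Q]` is prime to `p`, so the `p`-part of `[R : E]` divides
`[R ∩ M_p : E]`. Conversely `[R ∩ M_p : E]` divides both `[R : E]` and a power of `p`, so it is
exactly the `p`-part of `[R : E]`. The compositum of the `R_p` lies in `R` and its degree is
divisible by each of these pairwise coprime `p`-parts, hence by `[R : E]`.
-/

open Nat Module

namespace Subgroup

variable {G : Type*} [Group G]

theorem relIndex_sup_eq_relIndex_of_normal (H K : Subgroup G) [K.Normal] [K.FiniteIndex] :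
    H.relIndex (H ⊔ K) = H.relIndex K := by
  -- multiplied by `[H : H ⊓ K] = [H ⊔ K : K]`, both sides become `[H ⊔ K : H ⊓ K]`
  have h := relIndex_inf_mul_relIndex H K (H ⊔ K)
  rw [inf_of_le_left le_sup_right, relIndex_sup_right,
    ← relIndex_mul_relIndex (H ⊓ K) H (H ⊔ K) inf_le_left le_sup_left, inf_relIndex_left] at h
  have hKH : K.relIndex H ≠ 0 :=
    ne_zero_of_dvd_ne_zero FiniteIndex.index_ne_zero (relIndex_dvd_index_of_normal K H)
  exact (mul_left_cancel₀ hKH (by rw [← h, mul_comm])).symm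

theorem ordProj_index_dvd_index_sup {p : ℕ} (hp : p.Prime) (H K : Subgroup G) [K.Normal]
    [K.FiniteIndex] (hK : ¬ p ∣ Nat.card K) : ordProj[p] H.index ∣ (H ⊔ K).index := by
  have hcop : Nat.Coprime (ordProj[p] H.index) (H.relIndex (H ⊔ K)) := by
    refine Nat.Coprime.pow_left _ ((hp.coprime_iff_not_dvd).mpr fun h => hK (h.trans ?_))
    rw [relIndex_sup_eq_relIndex_of_normal]
    exact relIndex_dvd_card H K
  refine hcop.dvd_of_dvd_mul_left ?_
  rw [relIndex_mul_index le_sup_left]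
  exact ordProj_dvd _ _

end Subgroup

theorem Group.IsNilpotent.exists_normal_not_dvd_card_index_eq_pow {G : Type*} [Group G]
    [Finite G] (hG : Group.IsNilpotent G) {p : ℕ} [hp : Fact p.Prime] :
    ∃ Q : Subgroup G, Q.Normal ∧ ¬ p ∣ Nat.card Q ∧ ∃ k, Q.index = p ^ k := by
  by_cases hpG : p ∣ Nat.card G
  swap
  · exact ⟨⊤, inferInstance, by rwa [Subgroup.card_top], 0, by simp⟩
  obtain ⟨e⟩ := ((Group.isNilpotent_of_finite_tfae (G := G)).out 0 4).mp hG
  let P : Sylow p G := default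
  have hmem : p ∈ (Nat.card G).primeFactors :=
    Nat.mem_primeFactors.mpr ⟨hp.out, hpG, Nat.card_pos.ne'⟩
  -- `Q` is the kernel of the projection of `G ≃* ∏ q, ∏ (P : Sylow q G), P` onto the `p`-factor
  let π : G →* P := (Pi.evalMonoidHom _ P).comp
    ((Pi.evalMonoidHom (fun q : (Nat.card G).primeFactors => ∀ P : Sylow q G, P) ⟨p, hmem⟩).comp
      e.symm.toMonoidHom)
  have hπ : Function.Surjective π := (Function.surjective_eval P).comp
    ((Function.surjective_eval (⟨p, hmem⟩ : (Nat.card G).primeFactors)).comp e.symm.surjective)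
  have hidx : π.ker.index = ordProj[p] (Nat.card G) := by
    rw [Subgroup.index_ker, MonoidHom.range_eq_top.mpr hπ, Subgroup.card_top,
      Sylow.card_eq_multiplicity]
  refine ⟨π.ker, inferInstance, fun hdvd => ?_, _, hidx⟩
  refine Nat.pow_succ_factorization_not_dvd (Nat.card_pos (α := G)).ne' hp.out ?_
  calc p ^ ((Nat.card G).factorization p + 1) = ordProj[p] (Nat.card G) * p := pow_succ _ _
    _ ∣ π.ker.index * Nat.card π.ker := by rw [hidx]; exact mul_dvd_mul_left _ hdvd
    _ = Nat.card G := π.ker.index_mul_card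

namespace IntermediateField

variable {E M : Type*} [Field E] [Field M] [Algebra E M] [FiniteDimensional E M]

theorem fixingSubgroup_inf [IsGalois E M] (K L : IntermediateField E M) :
    (K ⊓ L).fixingSubgroup = K.fixingSubgroup ⊔ L.fixingSubgroup :=
  IsGalois.intermediateFieldEquivSubgroup.map_inf K L

theorem finrank_fixedField_eq_index [IsGalois E M] (H : Subgroup (M ≃ₐ[E] M)) :
    finrank E (fixedField H) = H.index := by
  rw [finrank_eq_fixingSubgroup_index, fixingSubgroup_fixedField]

theorem finrank_inf_dvd_ordProj {p : ℕ} (hp : p.Prime)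
    (R L : IntermediateField E M) (hL : ∃ k, finrank E L = p ^ k) :
    finrank E ↥(R ⊓ L) ∣ ordProj[p] (finrank E R) := by
  obtain ⟨k, hk⟩ := hL
  obtain ⟨j, -, hj⟩ := (Nat.dvd_prime_pow hp).mp (hk ▸ finrank_dvd_of_le_right inf_le_right)
  rw [hj, ← hp.pow_dvd_iff_dvd_ordProj finrank_pos.ne', ← hj]
  exact finrank_dvd_of_le_right inf_le_left

theorem exists_finrank_eq_pow_ordProj_dvd_finrank_inf [IsGalois E M]
    (hnil : Group.IsNilpotent (M ≃ₐ[E] M)) (R : IntermediateField E M) {p : ℕ} (hp : p.Prime) :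
    ∃ F : IntermediateField E M, (∃ k, finrank E F = p ^ k) ∧
      ordProj[p] (finrank E R) ∣ finrank E ↥(R ⊓ F) := by
  have := Fact.mk hp
  obtain ⟨Q, hQ, hQp, hQidx⟩ := hnil.exists_normal_not_dvd_card_index_eq_pow (p := p)
  refine ⟨fixedField Q, finrank_fixedField_eq_index Q ▸ hQidx, ?_⟩
  rw [finrank_eq_fixingSubgroup_index, finrank_eq_fixingSubgroup_index, fixingSubgroup_inf,
    fixingSubgroup_fixedField]
  exact R.fixingSubgroup.ordProj_index_dvd_index_sup hp Q hQp

theorem finrank_inf_eq_ordProj_of_forall_le [IsGalois E M]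
    (hnil : Group.IsNilpotent (M ≃ₐ[E] M)) (R L : IntermediateField E M) {p : ℕ} (hp : p.Prime)
    (hL : ∃ k, finrank E L = p ^ k)
    (hmax : ∀ K : IntermediateField E M, (∃ k, finrank E K = p ^ k) → K ≤ L) :
    finrank E ↥(R ⊓ L) = ordProj[p] (finrank E R) := by
  obtain ⟨F, hF, hdvd⟩ := exists_finrank_eq_pow_ordProj_dvd_finrank_inf hnil R hp
  exact Nat.dvd_antisymm (finrank_inf_dvd_ordProj hp R L hL)
    (hdvd.trans (finrank_dvd_of_le_right (inf_le_inf_left R (hmax F hF))))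

end IntermediateField

open IntermediateField in
theorem stmt_4_general {E M : Type*} [Field E] [Field M] [Algebra E M] [FiniteDimensional E M]
    [IsGalois E M] (hnil : Group.IsNilpotent (M ≃ₐ[E] M))
    (R : IntermediateField E M)
    (Mp : ℕ → IntermediateField E M)
    -- `Mp p` is the maximal `p`-extension of `E` inside `M`:
    (hMpPow : ∀ p : ℕ, p.Prime → ∃ k : ℕ, Module.finrank E (Mp p) = p ^ k)
    (hMpMax : ∀ p : ℕ, p.Prime → ∀ K : IntermediateField E M,
      (∃ k : ℕ, Module.finrank E K = p ^ k) → K ≤ Mp p) :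
    R = (⨆ p ∈ (Module.finrank E R).primeFactors, (R ⊓ Mp p)) ∧
      Module.finrank E R =
        ∏ p ∈ (Module.finrank E R).primeFactors, Module.finrank E ↥(R ⊓ Mp p) := by
  set n := finrank E R
  have hdeg : ∀ p ∈ n.primeFactors, finrank E ↥(R ⊓ Mp p) = ordProj[p] n := fun p hp =>
    have hpp := Nat.prime_of_mem_primeFactors hp
    finrank_inf_eq_ordProj_of_forall_le hnil R (Mp p) hpp (hMpPow p hpp) (hMpMax p hpp)
  have hprod : n = ∏ p ∈ n.primeFactors, finrank E ↥(R ⊓ Mp p) := by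
    rw [Finset.prod_congr rfl hdeg]
    exact Nat.prod_primeFactors_pow_factorization finrank_pos.ne'
  refine ⟨?_, hprod⟩
  have hle : ⨆ p ∈ n.primeFactors, R ⊓ Mp p ≤ R := iSup₂_le fun _ _ => inf_le_left
  refine (eq_of_le_of_finrank_eq hle (Nat.dvd_antisymm (finrank_dvd_of_le_right hle) ?_)).symm
  refine (dvd_of_eq hprod).trans (Finset.prod_dvd_of_isRelPrime (fun p hp q hq hpq => ?_)
    fun p hp => finrank_dvd_of_le_right (le_iSup₂ (f := fun p _ => R ⊓ Mp p) p hp))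
  rw [Function.onFun, hdeg p hp, hdeg q hq]
  exact Nat.coprime_iff_isRelPrime.mp <| Nat.coprime_pow_primes _ _
    (Nat.prime_of_mem_primeFactors hp) (Nat.prime_of_mem_primeFactors hq) hpq

theorem stmt_4 {E M : Type*} [Field E] [Field M] [Algebra E M] [FiniteDimensional E M]
    [IsGalois E M] (hnil : Group.IsNilpotent (M ≃ₐ[E] M))
    (R : IntermediateField E M) (hR : R ≠ ⊥)
    (Mp : ℕ → IntermediateField E M)
    -- `Mp p` is the maximal `p`-extension of `E` inside `M`:
    (hMpPow : ∀ p : ℕ, p.Prime → ∃ k : ℕ, Module.finrank E (Mp p) = p ^ k)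
    (hMpMax : ∀ p : ℕ, p.Prime → ∀ K : IntermediateField E M,
      (∃ k : ℕ, Module.finrank E K = p ^ k) → K ≤ Mp p) :
    R = (⨆ p ∈ (Module.finrank E R).primeFactors, (R ⊓ Mp p)) ∧
      Module.finrank E R =
        ∏ p ∈ (Module.finrank E R).primeFactors, Module.finrank E ↥(R ⊓ Mp p) :=
  stmt_4_general hnil R Mp hMpPow hMpMax
end

section
/- Let P be a finite nonabelian p-group all of whose proper subgroups are abelian (a Miller–Moreno p-group). Then the commutator subgroup [P,P] has order p, the center Z(P) equals the Frattini subgroup Φ(P), and P/Φ(P) is elementary abelian of order p². -/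
/-
Maximal subgroups of a `p`-group are normal of index `p`, so `Φ(P)` contains all `p`-th powers
and commutators. Two non-commuting elements `a, b` generate `P`, since `⟨a, b⟩` is nonabelian.
A central element outside a maximal subgroup `M` would give `P = M Z(P)`, which is abelian; and,
`P` not being cyclic, every element lies in some abelian maximal subgroup containing `Φ(P)`.
Hence `Z(P) = Φ(P)`. Then `P/Z(P)` is not cyclic, yet it is an abelian group of exponent `p`
generated by two elements, so it has order `p²`. Finally `c = [a, b]` is central, so `P/⟨c⟩`
is abelian and `[P, P] = ⟨c⟩`, while `c ^ p = [a ^ p, b] = 1` because `a ^ p ∈ Φ(P) = Z(P)`.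
-/

open Subgroup QuotientGroup
open scoped IsMulCommutative commutatorElement

section Generation

variable {G H : Type*} [Group G] [Group H]

lemma mul_comm_of_closure_eq_top {s : Set G} (hs : closure s = ⊤)
    (hcomm : ∀ x ∈ s, ∀ y ∈ s, x * y = y * x) (x y : G) : x * y = y * x :=
  Set.centralizer_centralizer_comm_of_comm hcomm
    x (closure_le_centralizer_centralizer s (hs ▸ mem_top x))
    y (closure_le_centralizer_centralizer s (hs ▸ mem_top y))

lemma closure_pair_map_eq_top {f : G →* H} (hf : Function.Surjective f) {a b : G}
    (h : closure {a, b} = ⊤) : closure {f a, f b} = ⊤ := by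
  rw [← Set.image_pair, ← MonoidHom.map_closure, h, map_top_of_surjective f hf]

lemma card_le_orderOf_mul_orderOf [Finite G] [IsMulCommutative G] {a b : G}
    (h : closure {a, b} = ⊤) : Nat.card G ≤ orderOf a * orderOf b := by
  have hsup : zpowers a ⊔ zpowers b = ⊤ := by
    rw [zpowers_eq_closure, zpowers_eq_closure, ← Subgroup.closure_union, Set.singleton_union, h]
  have hsurj : Function.Surjective fun x : zpowers a × zpowers b ↦ (x.1 : G) * x.2 := by
    intro g
    obtain ⟨y, hy, z, hz, rfl⟩ := mem_sup.mp (hsup ▸ mem_top g)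
    exact ⟨(⟨y, hy⟩, ⟨z, hz⟩), rfl⟩
  calc Nat.card G ≤ Nat.card (zpowers a × zpowers b) := Nat.card_le_card_of_surjective _ hsurj
    _ = orderOf a * orderOf b := by rw [Nat.card_prod, Nat.card_zpowers, Nat.card_zpowers]

lemma Subgroup.normal_of_le_center {N : Subgroup G} (h : N ≤ center G) : N.Normal :=
  ⟨fun n hn g ↦ by rwa [mem_center_iff.mp (h hn) g, mul_inv_cancel_right]⟩

lemma commutatorElement_pow_left {a b : G} (h : Commute a ⁅a, b⁆) (n : ℕ) :
    ⁅a ^ n, b⁆ = ⁅a, b⁆ ^ n := by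
  induction n with
  | zero => simp
  | succ n ih =>
    rw [pow_succ', commutatorElement_mul_left_eq_conj_mul, ih, (h.pow_right n).eq,
      mul_inv_cancel_right, pow_succ]

lemma commutator_eq_zpowers_of_closure_pair_eq_top {a b : G} (h : closure {a, b} = ⊤)
    (hc : ⁅a, b⁆ ∈ center G) : commutator G = zpowers ⁅a, b⁆ := by
  have : (zpowers ⁅a, b⁆).Normal := normal_of_le_center (zpowers_le.mpr hc)
  have hab : mk' (zpowers ⁅a, b⁆) a * mk' _ b = mk' _ b * mk' _ a := by
    rw [← commutatorElement_eq_one_iff_mul_comm, ← map_commutatorElement, mk'_apply, eq_one_iff]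
    exact mem_zpowers _
  refine le_antisymm (Normal.quotient_commutative_iff_commutator_le.mp ?_)
    (zpowers_le.mpr (commutator_mem_commutator (mem_top a) (mem_top b)))
  refine isMulCommutative_iff.mpr
    (mul_comm_of_closure_eq_top (closure_pair_map_eq_top (mk'_surjective _) h) ?_)
  rintro x (rfl | rfl) y (rfl | rfl) <;> first | rfl | exact hab | exact hab.symm

end Generation

lemma le_frattini_iff {G : Type*} [Group G] {H : Subgroup G} :
    H ≤ frattini G ↔ ∀ M : Subgroup G, IsCoatom M → H ≤ M :=
  le_iInf₂_iff

namespace IsPGroup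

variable {p : ℕ} [Fact p.Prime] {G : Type*} [Group G] [Finite G]

lemma normal_of_isCoatom (hG : IsPGroup p G) {M : Subgroup G} (hM : IsCoatom M) : M.Normal :=
  have h : ∀ M : Subgroup G, IsCoatom M → M.Normal :=
    ((Group.isNilpotent_of_finite_tfae (G := G)).out 0 2).mp hG.isNilpotent
  h M hM

lemma index_of_isCoatom (hG : IsPGroup p G) {M : Subgroup G} (hM : IsCoatom M) :
    M.index = p := by
  have := hG.normal_of_isCoatom hM
  have : IsSimpleOrder (Subgroup (G ⧸ M)) :=
    (OrderIso.isSimpleOrder_iff (β := Set.Ici M) (comapMk'OrderIso M)).mpr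
      (Set.isSimpleOrder_Ici_iff_isCoatom.mpr hM)
  have : Nontrivial (G ⧸ M) := Subgroup.nontrivial_iff.mp inferInstance
  obtain ⟨g, hg⟩ := exists_prime_orderOf_dvd_card' p
    ((hG.to_quotient M).card_eq_or_dvd.resolve_left Finite.one_lt_card.ne')
  have hg1 : zpowers g ≠ ⊥ := by
    rw [Ne, zpowers_eq_bot, ← orderOf_eq_one_iff, hg]
    exact (Fact.out : p.Prime).ne_one
  rw [index_eq_card, ← hg, ← Nat.card_zpowers, (eq_bot_or_eq_top (zpowers g)).resolve_left hg1,
    card_top]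

lemma commutator_le_of_isCoatom (hG : IsPGroup p G) {M : Subgroup G} (hM : IsCoatom M) :
    commutator G ≤ M := by
  have := hG.normal_of_isCoatom hM
  have : IsCyclic (G ⧸ M) := isCyclic_of_prime_card (index_eq_card M ▸ hG.index_of_isCoatom hM)
  exact Normal.quotient_commutative_iff_commutator_le.mp inferInstance

lemma pow_mem_of_isCoatom (hG : IsPGroup p G) {M : Subgroup G} (hM : IsCoatom M) (x : G) :
    x ^ p ∈ M := by
  have := hG.normal_of_isCoatom hM
  exact hG.index_of_isCoatom hM ▸ M.pow_index_mem x

lemma commutator_le_frattini (hG : IsPGroup p G) : commutator G ≤ frattini G :=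
  le_frattini_iff.mpr fun _ ↦ hG.commutator_le_of_isCoatom

lemma pow_mem_frattini (hG : IsPGroup p G) (x : G) : x ^ p ∈ frattini G :=
  zpowers_le.mp (le_frattini_iff.mpr fun _ hM ↦ zpowers_le.mpr (hG.pow_mem_of_isCoatom hM x))

lemma isMulCommutative_quotient_frattini (hG : IsPGroup p G) :
    IsMulCommutative (G ⧸ frattini G) :=
  Normal.quotient_commutative_iff_commutator_le.mpr hG.commutator_le_frattini

lemma quotient_frattini_pow_eq_one (hG : IsPGroup p G) (x : G ⧸ frattini G) : x ^ p = 1 := by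
  induction x using QuotientGroup.induction_on with
  | H x => rw [← QuotientGroup.mk_pow, eq_one_iff]; exact hG.pow_mem_frattini x

end IsPGroup

namespace MillerMoreno

variable {G : Type*} [Group G]

lemma closure_pair_eq_top (hprop : ∀ H : Subgroup G, H ≠ ⊤ → ∀ a b : H, a * b = b * a)
    {a b : G} (hab : a * b ≠ b * a) : closure {a, b} = ⊤ := by
  by_contra h
  exact hab (congrArg Subtype.val
    (hprop _ h ⟨a, subset_closure (by simp)⟩ ⟨b, subset_closure (by simp)⟩))

lemma zpowers_ne_top (hna : ¬ ∀ a b : G, a * b = b * a) (g : G) : zpowers g ≠ ⊤ := fun h ↦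
  have : IsCyclic G := isCyclic_iff_exists_zpowers_eq_top.mpr ⟨g, h⟩
  hna mul_comm'

lemma center_le_frattini (hna : ¬ ∀ a b : G, a * b = b * a)
    (hprop : ∀ H : Subgroup G, H ≠ ⊤ → ∀ a b : H, a * b = b * a) :
    center G ≤ frattini G := by
  refine le_frattini_iff.mpr fun M hM ↦ ?_
  by_contra hZM
  have htop : M ⊔ center G = ⊤ := hM.2 _ (left_lt_sup.mpr hZM)
  have hgen : closure (M ∪ center G : Set G) = ⊤ := by
    rw [Subgroup.closure_union, closure_eq, closure_eq, htop]
  refine hna (mul_comm_of_closure_eq_top hgen ?_)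
  rintro x (hx | hx) y (hy | hy)
  · exact congrArg Subtype.val (hprop M hM.1 ⟨x, hx⟩ ⟨y, hy⟩)
  · exact mem_center_iff.mp hy x
  · exact (mem_center_iff.mp hx y).symm
  · exact mem_center_iff.mp hy x

lemma frattini_le_center [Finite G] (hna : ¬ ∀ a b : G, a * b = b * a)
    (hprop : ∀ H : Subgroup G, H ≠ ⊤ → ∀ a b : H, a * b = b * a) :
    frattini G ≤ center G := by
  intro x hx
  refine mem_center_iff.mpr fun g ↦ ?_
  obtain ⟨M, hM, hgM⟩ :=
    (eq_top_or_exists_le_coatom (zpowers g)).resolve_left (zpowers_ne_top hna g)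
  exact congrArg Subtype.val
    (hprop M hM.1 ⟨g, hgM (mem_zpowers g)⟩ ⟨x, frattini_le_coatom hM hx⟩)

lemma frattini_eq_center [Finite G] (hna : ¬ ∀ a b : G, a * b = b * a)
    (hprop : ∀ H : Subgroup G, H ≠ ⊤ → ∀ a b : H, a * b = b * a) :
    frattini G = center G :=
  le_antisymm (frattini_le_center hna hprop) (center_le_frattini hna hprop)

variable {p : ℕ} [Fact p.Prime] [Finite G]

lemma card_quotient_frattini (hG : IsPGroup p G) (hna : ¬ ∀ a b : G, a * b = b * a)
    (hprop : ∀ H : Subgroup G, H ≠ ⊤ → ∀ a b : H, a * b = b * a) :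
    Nat.card (G ⧸ frattini G) = p ^ 2 := by
  obtain ⟨a, b, hab⟩ : ∃ a b : G, a * b ≠ b * a := by simpa using hna
  obtain ⟨n, hn⟩ := IsPGroup.iff_card.mp (hG.to_quotient (frattini G))
  have hp : p.Prime := Fact.out
  have two_le : 2 ≤ n := by
    by_contra! hn2
    have : IsCyclic (G ⧸ frattini G) :=
      isCyclic_of_card_dvd_prime (hn ▸ (pow_dvd_pow p (by omega : n ≤ 1)).trans (pow_one p).dvd)
    have := (mk' (frattini G)).isMulCommutative_of_isCyclic_of_ker_le_center
      (by rw [ker_mk', frattini_eq_center hna hprop])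
    exact hna mul_comm'
  have le_two : n ≤ 2 := by
    have := hG.isMulCommutative_quotient_frattini
    have hord (x : G) : orderOf (x : G ⧸ frattini G) ≤ p :=
      orderOf_le_of_pow_eq_one hp.pos (hG.quotient_frattini_pow_eq_one x)
    have hcard := card_le_orderOf_mul_orderOf
      (closure_pair_map_eq_top (mk'_surjective (frattini G)) (closure_pair_eq_top hprop hab))
    refine (Nat.pow_le_pow_iff_right hp.one_lt).mp (hn ▸ hcard.trans ?_)
    rw [sq]
    exact Nat.mul_le_mul (hord a) (hord b)
  rw [hn, le_antisymm le_two two_le]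

lemma card_commutator (hG : IsPGroup p G) (hna : ¬ ∀ a b : G, a * b = b * a)
    (hprop : ∀ H : Subgroup G, H ≠ ⊤ → ∀ a b : H, a * b = b * a) :
    Nat.card (commutator G) = p := by
  obtain ⟨a, b, hab⟩ : ∃ a b : G, a * b ≠ b * a := by simpa using hna
  have hc : ⁅a, b⁆ ∈ center G := frattini_eq_center hna hprop ▸
    hG.commutator_le_frattini (commutator_mem_commutator (mem_top a) (mem_top b))
  have hap : a ^ p ∈ center G := frattini_eq_center hna hprop ▸ hG.pow_mem_frattini a
  have hcp : ⁅a, b⁆ ^ p = 1 := by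
    rw [← commutatorElement_pow_left (mem_center_iff.mp hc a),
      commutatorElement_eq_one_iff_mul_comm]
    exact (mem_center_iff.mp hap b).symm
  rw [commutator_eq_zpowers_of_closure_pair_eq_top (closure_pair_eq_top hprop hab) hc,
    Nat.card_zpowers]
  exact orderOf_eq_prime hcp (mt commutatorElement_eq_one_iff_mul_comm.mp hab)

end MillerMoreno

theorem stmt_6 {P : Type*} [Group P] [Finite P] (p : ℕ) (hp : p.Prime)
    (hpgrp : IsPGroup p P)
    (hna : ¬ ∀ a b : P, a * b = b * a)
    (hprop : ∀ H : Subgroup P, H ≠ ⊤ → ∀ a b : H, a * b = b * a) :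
    Nat.card (commutator P) = p ∧
    Subgroup.center P = frattini P ∧
    Nat.card (P ⧸ frattini P) = p ^ 2 ∧
    (∀ x : P ⧸ frattini P, x ^ p = 1) ∧
    (∀ x y : P ⧸ frattini P, x * y = y * x) := by
  have : Fact p.Prime := ⟨hp⟩
  have := hpgrp.isMulCommutative_quotient_frattini
  exact ⟨MillerMoreno.card_commutator hpgrp hna hprop,
    (MillerMoreno.frattini_eq_center hna hprop).symm,
    MillerMoreno.card_quotient_frattini hpgrp hna hprop,
    hpgrp.quotient_frattini_pow_eq_one, mul_comm'⟩
end

section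
/- Let P be a finite nonabelian p-group all of whose proper subgroups are abelian, and suppose P is not isomorphic to the quaternion group of order 8. Then P possesses a subgroup P₀ that is not normal in P. -/
/-!
Suppose every subgroup of `P` is normal. Take non-commuting `a, b` with `orderOf b` least among
non-central elements and `orderOf a` least among the elements not commuting with `b`. As `⟨a⟩` and
`⟨b⟩` are normal, `c = ⁅a, b⁆` lies in `⟨a⟩ ⊓ ⟨b⟩`, hence commutes with `a` and `b`, and
`(b * a ^ k) ^ n = b ^ n * a ^ (k * n) * c ^ (k * n.choose 2)`. Minimality of `orderOf a` gives
`c ^ p = 1`; minimality of `orderOf b`, tested on suitable elements `b * a ^ k`, forces `p = 2`,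
`orderOf a = orderOf b = 4` and `a ^ 2 = b ^ 2 = c`. These are the defining relations of `Q₈`, and
since every proper subgroup is abelian, the non-commuting `a, b` generate `P`, so `P ≃* Q₈`.
-/

open Subgroup
open scoped commutatorElement

lemma Nat.Prime.eq_two_and_eq_one_of_not_dvd_choose_two {p k : ℕ} (hp : p.Prime)
    (h : ¬ p ∣ (p ^ k).choose 2) : p = 2 ∧ k = 1 := by
  have htwice : 2 * (p ^ k).choose 2 = p ^ k * (p ^ k - 1) := by
    rw [Nat.choose_two_right, Nat.mul_div_cancel' (Nat.even_mul_pred_self _).two_dvd]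
  obtain _ | j := k
  · simp at h
  have hp2 : p = 2 := by
    by_contra hne
    have hdvd : p ∣ 2 * (p ^ (j + 1)).choose 2 :=
      htwice ▸ (dvd_pow_self p j.succ_ne_zero).mul_right _
    exact h ((hp.dvd_mul.mp hdvd).resolve_left
      fun h2 => hne ((Nat.prime_dvd_prime_iff_eq hp Nat.prime_two).mp h2))
  subst hp2
  refine ⟨rfl, ?_⟩
  by_contra hj
  obtain ⟨q, hq⟩ : 2 ^ 2 ∣ 2 ^ (j + 1) := pow_dvd_pow 2 (by omega)
  rw [hq] at htwice h
  exact h ⟨q * (2 ^ 2 * q - 1), by linarith⟩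

section ClassTwo

variable {G : Type*} [Group G] {a b c : G}

lemma pow_mul_eq_mul_pow_mul_pow (h : a * b = b * a * c) (hca : Commute c a) (n : ℕ) :
    a ^ n * b = b * a ^ n * c ^ n := by
  have hsemi : SemiconjBy b (a * c) a := by rw [SemiconjBy, ← mul_assoc, h]
  rw [mul_assoc, ← hca.symm.mul_pow, (hsemi.pow_right n).eq]

lemma mul_pow_eq_pow_mul_pow_mul_pow (h : a * b = b * a * c) (hca : Commute c a)
    (hcb : Commute c b) (n : ℕ) : (b * a) ^ n = b ^ n * a ^ n * c ^ n.choose 2 := by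
  induction n with
  | zero => simp
  | succ n ih =>
    calc (b * a) ^ (n + 1) = b ^ n * (a ^ n * b) * (c ^ n.choose 2 * a) := by
          rw [pow_succ, ih]; simp only [mul_assoc]; rw [(hcb.pow_left _).left_comm]
      _ = b ^ (n + 1) * a ^ (n + 1) * c ^ (n + 1).choose 2 := by
          rw [pow_mul_eq_mul_pow_mul_pow h hca, (hca.pow_left _).eq, Nat.choose_succ_succ',
            Nat.choose_one_right, pow_succ b, pow_succ a, pow_add c]
          simp only [mul_assoc]; rw [(hca.pow_left n).left_comm]

end ClassTwo

section Commutator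

variable {G : Type*} [Group G] {a b : G}

lemma commutatorElement_mem_zpowers_left (ha : (zpowers a).Normal) : ⁅a, b⁆ ∈ zpowers a := by
  rw [commutatorElement_def, mul_assoc, mul_assoc]
  exact mul_mem (mem_zpowers a)
    (by simpa [mul_assoc] using ha.conj_mem _ (inv_mem (mem_zpowers a)) b)

lemma commutatorElement_mem_zpowers_right (hb : (zpowers b).Normal) : ⁅a, b⁆ ∈ zpowers b :=
  mul_mem (hb.conj_mem b (mem_zpowers b) a) (inv_mem (mem_zpowers b))

lemma commute_of_mem_zpowers {x y : G} (h : x ∈ zpowers y) : Commute x y := by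
  obtain ⟨k, rfl⟩ := mem_zpowers_iff.mp h
  exact (Commute.refl y).zpow_left k

lemma commute_commutatorElement_left (ha : (zpowers a).Normal) : Commute ⁅a, b⁆ a :=
  commute_of_mem_zpowers (commutatorElement_mem_zpowers_left ha)

lemma commute_commutatorElement_right (hb : (zpowers b).Normal) : Commute ⁅a, b⁆ b :=
  commute_of_mem_zpowers (commutatorElement_mem_zpowers_right hb)

lemma mul_eq_mul_mul_commutatorElement (ha : Commute ⁅a, b⁆ a) (hb : Commute ⁅a, b⁆ b) :
    a * b = b * a * ⁅a, b⁆ := by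
  rw [← ((hb.mul_right ha).eq), commutatorElement_def]; group

lemma mul_pow_pow_eq (ha : Commute ⁅a, b⁆ a) (hb : Commute ⁅a, b⁆ b) (k n : ℕ) :
    (b * a ^ k) ^ n = b ^ n * a ^ (k * n) * ⁅a, b⁆ ^ (k * n.choose 2) := by
  have hrel := pow_mul_eq_mul_pow_mul_pow (mul_eq_mul_mul_commutatorElement ha hb) ha k
  rw [mul_pow_eq_pow_mul_pow_mul_pow hrel (ha.pow_pow k k) (hb.pow_left k), pow_mul, pow_mul]

end Commutator

section Cyclic

variable {G : Type*} [Group G] [Finite G]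

lemma zpowers_pow_prime_pow_eq {p k : ℕ} [hp : Fact p.Prime] {x c : G}
    (hx : orderOf x = p ^ (k + 1)) (hc : c ∈ zpowers x) (hco : orderOf c = p) :
    zpowers (x ^ p ^ k) = zpowers c := by
  have hpk : p ^ k ≠ 0 := pow_ne_zero k hp.out.ne_zero
  have hxk : orderOf (x ^ p ^ k) = p := by
    rw [orderOf_pow_of_dvd hpk (hx ▸ pow_dvd_pow p k.le_succ), hx, pow_succ,
      Nat.mul_div_cancel_left _ (Nat.pos_of_ne_zero hpk)]
  obtain ⟨m, rfl : x ^ m = c⟩ := mem_powers_iff_mem_zpowers.mpr hc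
  obtain ⟨t, rfl⟩ : p ^ k ∣ m := by
    have : p ^ k * p ∣ m * p := by
      rw [← pow_succ, ← hx, orderOf_dvd_iff_pow_eq_one, pow_mul, ← hco, pow_orderOf_eq_one]
    exact Nat.dvd_of_mul_dvd_mul_right hp.out.pos this
  refine (eq_of_le_of_card_ge ?_ ?_).symm
  · rw [zpowers_le, pow_mul]; exact npow_mem_zpowers _ t
  · rw [Nat.card_zpowers, Nat.card_zpowers, hxk, hco]

lemma eq_of_zpowers_eq_of_orderOf_eq_two {x y : G} (h : zpowers x = zpowers y)
    (hy : orderOf y = 2) : x = y := by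
  classical
  have hx : orderOf x = 2 := by rw [← Nat.card_zpowers, h, Nat.card_zpowers, hy]
  have hmem : x ∈ zpowers y := h ▸ mem_zpowers x
  rw [mem_zpowers_iff_mem_range_orderOf, hy] at hmem
  obtain ⟨i, hi, rfl⟩ := Finset.mem_image.mp hmem
  rw [Finset.mem_range] at hi
  interval_cases i <;> simp_all

end Cyclic

section Quaternion

variable {G : Type*} [Group G] {A B : G}

lemma not_commute_of_mul_eq_mul_inv (hA : orderOf A = 4) (hAB : A * B = B * A⁻¹) :
    ¬Commute A B := by
  intro h
  have hA2 : A ^ 2 = 1 := by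
    rw [sq, mul_eq_one_iff_eq_inv]; exact mul_left_cancel (h.eq.symm.trans hAB)
  have := Nat.le_of_dvd two_pos (hA ▸ orderOf_dvd_of_pow_eq_one hA2)
  omega

lemma zpow_val_eq_zpow {n : ℕ} [NeZero n] (hA : orderOf A = n) {i : ZMod n} {m : ℤ}
    (h : (m : ZMod n) = i) : A ^ (i.val : ℤ) = A ^ m := by
  rw [zpow_eq_zpow_iff_modEq, hA, ← ZMod.intCast_eq_intCast_iff, h]
  simp

def quaternionGroupHom (hA : orderOf A = 4) (hB : B ^ 2 = A ^ 2) (hAB : A * B = B * A⁻¹) :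
    QuaternionGroup 2 →* G :=
  MonoidHom.mk'
    (fun | .a i => A ^ (i.val : ℤ) | .xa i => B * A ^ (i.val : ℤ))
    (by
      have hzpow (k : ℤ) : A ^ k * B = B * A ^ (-k) := by
        rw [zpow_neg, ← inv_zpow]
        exact ((show SemiconjBy B A⁻¹ A from hAB.symm).zpow_right k).symm
      have hBB : B * B = A ^ (2 : ℤ) := by rw [← sq, hB, ← zpow_natCast, Nat.cast_ofNat]
      rintro (i | i) (j | j) <;>
        simp only [QuaternionGroup.a_mul_a, QuaternionGroup.a_mul_xa, QuaternionGroup.xa_mul_a,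
          QuaternionGroup.xa_mul_xa]
      · rw [← zpow_add]; exact zpow_val_eq_zpow hA (by push_cast; simp)
      · rw [← mul_assoc, hzpow, mul_assoc, ← zpow_add]
        exact congrArg (B * ·) (zpow_val_eq_zpow hA (by push_cast; simp; ring))
      · rw [mul_assoc, ← zpow_add]
        exact congrArg (B * ·) (zpow_val_eq_zpow hA (by push_cast; simp))
      · rw [mul_assoc, ← mul_assoc (A ^ _), hzpow, ← mul_assoc, ← mul_assoc, hBB, mul_assoc,
          ← zpow_add, ← zpow_add]
        exact zpow_val_eq_zpow hA (by push_cast; simp; ring))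

variable (hA : orderOf A = 4) (hB : B ^ 2 = A ^ 2) (hAB : A * B = B * A⁻¹)

@[simp]
lemma quaternionGroupHom_a (i : ZMod (2 * 2)) :
    quaternionGroupHom hA hB hAB (.a i) = A ^ (i.val : ℤ) := rfl

@[simp]
lemma quaternionGroupHom_xa (i : ZMod (2 * 2)) :
    quaternionGroupHom hA hB hAB (.xa i) = B * A ^ (i.val : ℤ) := rfl

lemma quaternionGroupHom_injective : Function.Injective (quaternionGroupHom hA hB hAB) := by
  rw [injective_iff_map_eq_one]
  rintro (i | i) h
  · rw [quaternionGroupHom_a, ← orderOf_dvd_iff_zpow_eq_one, hA] at h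
    have hi : i.val = 0 := by have := i.val_lt; omega
    rw [(ZMod.val_eq_zero i).mp hi, QuaternionGroup.one_def]
  · rw [quaternionGroupHom_xa, mul_eq_one_iff_eq_inv] at h
    exact absurd (h ▸ ((Commute.refl A).zpow_right _).inv_right)
      (not_commute_of_mul_eq_mul_inv hA hAB)

end Quaternion

section MinimalPair

variable {G : Type*} [Group G]

structure IsMinimalNoncommutingPair (a b : G) : Prop where
  not_commute : ¬Commute a b
  orderOf_right_le_orderOf_left : orderOf b ≤ orderOf a
  orderOf_left_le : ∀ x, ¬Commute x b → orderOf a ≤ orderOf x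
  orderOf_right_le : ∀ y, ¬Commute a y → orderOf b ≤ orderOf y

lemma exists_isMinimalNoncommutingPair [Finite G] (h : ¬∀ a b : G, Commute a b) :
    ∃ a b : G, IsMinimalNoncommutingPair a b := by
  simp only [not_forall] at h
  obtain ⟨a₀, b₀, h₀⟩ := h
  obtain ⟨b, ⟨a₁, hb⟩, hbmin⟩ := Set.exists_min_image {b : G | ∃ a, ¬Commute a b} orderOf
    (Set.toFinite _) ⟨b₀, a₀, h₀⟩
  obtain ⟨a, ha, hamin⟩ := Set.exists_min_image {a : G | ¬Commute a b} orderOf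
    (Set.toFinite _) ⟨a₁, hb⟩
  exact ⟨a, b, ha, hbmin a ⟨b, fun h => ha h.symm⟩, hamin, fun y hy => hbmin y ⟨a, hy⟩⟩

namespace IsMinimalNoncommutingPair

variable {a b : G}

lemma left_ne_one (hab : IsMinimalNoncommutingPair a b) : a ≠ 1 := by
  rintro rfl; exact hab.not_commute (Commute.one_left b)

lemma right_ne_one (hab : IsMinimalNoncommutingPair a b) : b ≠ 1 := by
  rintro rfl; exact hab.not_commute (Commute.one_right a)

lemma mul_pow_ne_one (hab : IsMinimalNoncommutingPair a b) (k : ℕ) {n : ℕ} (hn : 0 < n)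
    (hlt : n < orderOf b) : (b * a ^ k) ^ n ≠ 1 := fun h =>
  have hcomm : ¬Commute a (b * a ^ k) := fun h' =>
    hab.not_commute (by simpa using h'.mul_right ((Commute.self_pow a k).inv_right))
  absurd hlt (not_lt.mpr ((hab.orderOf_right_le _ hcomm).trans (orderOf_le_of_pow_eq_one hn h)))

end IsMinimalNoncommutingPair

end MinimalPair

section Dedekind

variable {G : Type*} [Group G] {p : ℕ} [hp : Fact p.Prime]

lemma IsPGroup.exists_orderOf_eq_pow_succ (hG : IsPGroup p G) {x : G} (hx : x ≠ 1) :
    ∃ k, orderOf x = p ^ (k + 1) := by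
  obtain ⟨_ | k, hk⟩ := hG.exists_orderOf_eq_pow x
  · exact absurd (orderOf_eq_one_iff.mp (hk.trans (pow_zero p))) hx
  · exact ⟨k, hk⟩

variable [Finite G] {a b : G}

namespace IsMinimalNoncommutingPair

lemma commutatorElement_pow_eq_one (hab : IsMinimalNoncommutingPair a b) (hG : IsPGroup p G)
    (hnorm : ∀ H : Subgroup G, H.Normal) : ⁅a, b⁆ ^ p = 1 := by
  have hca : Commute ⁅a, b⁆ a := commute_commutatorElement_left (hnorm _)
  have hcb : Commute ⁅a, b⁆ b := commute_commutatorElement_right (hnorm _)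
  have hlt : orderOf (a ^ p) < orderOf a := by
    rw [orderOf_pow_of_dvd hp.out.ne_zero (hG.dvd_orderOf hab.left_ne_one)]
    exact Nat.div_lt_self (orderOf_pos a) hp.out.one_lt
  have hcomm : Commute (a ^ p) b := by
    by_contra h
    exact absurd hlt (not_lt.mpr (hab.orderOf_left_le _ h))
  have hrel := pow_mul_eq_mul_pow_mul_pow (mul_eq_mul_mul_commutatorElement hca hcb) hca p
  rw [hcomm.eq] at hrel
  exact mul_eq_left.mp hrel.symm

lemma orderOf_commutatorElement (hab : IsMinimalNoncommutingPair a b) (hG : IsPGroup p G)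
    (hnorm : ∀ H : Subgroup G, H.Normal) : orderOf ⁅a, b⁆ = p :=
  orderOf_eq_prime (hab.commutatorElement_pow_eq_one hG hnorm)
    (mt commutatorElement_eq_one_iff_commute.mp hab.not_commute)

/-- Otherwise, as `a ^ p ^ α` and `b ^ p ^ β` both generate `⟨⁅a, b⁆⟩`, some `a ^ k` satisfies
`(a ^ k) ^ p ^ β = (b ^ p ^ β)⁻¹`, and then `b * a ^ k` has order `< orderOf b`. -/
lemma not_dvd_choose_two (hab : IsMinimalNoncommutingPair a b) (hG : IsPGroup p G)
    (hnorm : ∀ H : Subgroup G, H.Normal) {β : ℕ} (hb : orderOf b = p ^ (β + 1)) :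
    ¬ p ∣ (p ^ β).choose 2 := by
  rintro ⟨q, hq⟩
  have hca : Commute ⁅a, b⁆ a := commute_commutatorElement_left (hnorm _)
  have hcb : Commute ⁅a, b⁆ b := commute_commutatorElement_right (hnorm _)
  have hc := hab.orderOf_commutatorElement hG hnorm
  obtain ⟨α, ha⟩ := hG.exists_orderOf_eq_pow_succ hab.left_ne_one
  have hβα : β ≤ α := by
    have := hab.orderOf_right_le_orderOf_left
    rw [ha, hb, Nat.pow_le_pow_iff_right hp.out.one_lt] at this
    omega
  have hzb := zpowers_pow_prime_pow_eq hb (commutatorElement_mem_zpowers_right (hnorm _)) hc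
  have hza := zpowers_pow_prime_pow_eq ha (commutatorElement_mem_zpowers_left (hnorm _)) hc
  obtain ⟨j, hj : (a ^ p ^ α) ^ j = (b ^ p ^ β)⁻¹⟩ :=
    mem_powers_iff_mem_zpowers.mpr (hza ▸ hzb ▸ inv_mem (mem_zpowers _))
  apply hab.mul_pow_ne_one (p ^ (α - β) * j) (pow_pos hp.out.pos β)
    (hb ▸ Nat.pow_lt_pow_right hp.out.one_lt β.lt_succ_self)
  have hak : a ^ (p ^ (α - β) * j * p ^ β) = (b ^ p ^ β)⁻¹ := by
    rw [← hj, ← pow_mul, mul_right_comm, ← pow_add, Nat.sub_add_cancel hβα]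
  have hck : ⁅a, b⁆ ^ (p ^ (α - β) * j * (p * q)) = 1 := by
    rw [mul_left_comm, pow_mul, hab.commutatorElement_pow_eq_one hG hnorm, one_pow]
  rw [mul_pow_pow_eq hca hcb, hq, hak, hck, mul_one, mul_inv_cancel]

lemma quaternion_relations (hab : IsMinimalNoncommutingPair a b) (hG : IsPGroup p G)
    (hnorm : ∀ H : Subgroup G, H.Normal) :
    orderOf a = 4 ∧ b ^ 2 = a ^ 2 ∧ a * b = b * a⁻¹ := by
  have hca : Commute ⁅a, b⁆ a := commute_commutatorElement_left (hnorm _)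
  have hcb : Commute ⁅a, b⁆ b := commute_commutatorElement_right (hnorm _)
  obtain ⟨β, hb⟩ := hG.exists_orderOf_eq_pow_succ hab.right_ne_one
  obtain ⟨rfl, rfl⟩ :=
    hp.out.eq_two_and_eq_one_of_not_dvd_choose_two (hab.not_dvd_choose_two hG hnorm hb)
  have hc := hab.orderOf_commutatorElement hG hnorm
  obtain ⟨α, ha⟩ := hG.exists_orderOf_eq_pow_succ hab.left_ne_one
  have hb2 : b ^ 2 = ⁅a, b⁆ := eq_of_zpowers_eq_of_orderOf_eq_two
    (zpowers_pow_prime_pow_eq hb (commutatorElement_mem_zpowers_right (hnorm _)) hc) hc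
  have ha2 : a ^ 2 ^ α = ⁅a, b⁆ := eq_of_zpowers_eq_of_orderOf_eq_two
    (zpowers_pow_prime_pow_eq ha (commutatorElement_mem_zpowers_left (hnorm _)) hc) hc
  have hc2 : ⁅a, b⁆ ^ 2 = 1 := hc ▸ pow_orderOf_eq_one _
  obtain rfl : α = 1 := by
    have hα : 1 ≤ α := by
      have := hab.orderOf_right_le_orderOf_left
      rw [ha, hb, Nat.pow_le_pow_iff_right one_lt_two] at this
      omega
    by_contra hα1
    apply hab.mul_pow_ne_one (2 ^ (α - 1)) two_pos (by rw [hb]; norm_num)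
    rw [mul_pow_pow_eq hca hcb, hb2, ← pow_succ, Nat.sub_add_cancel hα, ha2, Nat.choose_self,
      mul_one, ← Nat.sub_add_cancel (show 1 ≤ α - 1 by omega), pow_succ', pow_mul, hc2,
      one_pow, mul_one, ← sq, hc2]
  rw [pow_one] at ha2
  have ha4 : orderOf a = 4 := ha
  refine ⟨ha4, hb2.trans ha2.symm, ?_⟩
  rw [mul_eq_mul_mul_commutatorElement hca hcb, ← ha2, mul_assoc, ← pow_succ',
    eq_inv_of_mul_eq_one_left (a := a ^ 3) (by rw [← pow_succ, ← pow_orderOf_eq_one a, ha4])]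

end IsMinimalNoncommutingPair

end Dedekind

theorem stmt_9 {P : Type*} [Group P] [Finite P] (p : ℕ) (hp : p.Prime)
    (hpgrp : IsPGroup p P)
    (hna : ¬ ∀ a b : P, a * b = b * a)
    (hprop : ∀ H : Subgroup P, H ≠ ⊤ → ∀ a b : H, a * b = b * a)
    (hQ8 : IsEmpty (P ≃* QuaternionGroup 2)) :
    ∃ P₀ : Subgroup P, ¬ P₀.Normal := by
  have := Fact.mk hp
  by_contra! hnorm
  obtain ⟨a, b, hab⟩ := exists_isMinimalNoncommutingPair hna
  obtain ⟨ha, hb, hrel⟩ := hab.quaternion_relations hpgrp hnorm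
  set F := quaternionGroupHom ha hb hrel
  have hrange : F.range = ⊤ := by
    by_contra hne
    have hab' := hprop F.range hne ⟨a, .a 1, zpow_one a⟩ ⟨b, .xa 0, by simp [F]⟩
    exact not_commute_of_mul_eq_mul_inv ha hrel (congrArg Subtype.val hab')
  exact hQ8.false (MulEquiv.ofBijective F
    ⟨quaternionGroupHom_injective ha hb hrel, MonoidHom.range_eq_top.mp hrange⟩).symm
end

section
/- Let G be a finite group that is a semidirect product of an abelian normal subgroup H of odd order by a group of order 2, where every element φ of order 2 in G acts on H by inversion: φhφ⁻¹ = h⁻¹ for all h ∈ H. Then every subgroup of G of odd order is contained in H and is normal in G, while every subgroup of G of even order equals its own normalizer in G. -/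
/-!
Since `H` has odd order and index 2, its elements are exactly the elements of odd order of `G`, and
every involution `τ` of `G` lies outside `H`, so that `G = H ∪ H τ`. Conjugation by `H τ` acts on the
abelian group `H` as inversion; hence each subgroup of `H` is normal, and a subgroup of odd order
lies in `H`. A subgroup `K` of even order contains an involution `τ`; if `g ∈ H` normalizes `K`, then
`g τ g⁻¹ = g² τ ∈ K`, so `g² ∈ K` and `g ∈ K` because `g` has odd order. An element of the
normalizer outside `H` is `τ⁻¹` times one inside `H`.
-/

section

variable {G : Type*} [Group G] {H K : Subgroup G}

theorem mem_of_sq_mem_of_odd_orderOf {x : G} (hx : x ^ 2 ∈ H) (hodd : Odd (orderOf x)) : x ∈ H := by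
  obtain ⟨m, hm⟩ := hodd
  have hpow : (x ^ 2) ^ (m + 1) = x := by
    rw [← pow_mul, show 2 * (m + 1) = orderOf x + 1 by omega, pow_succ, pow_orderOf_eq_one,
      one_mul]
  exact hpow ▸ pow_mem hx _

theorem odd_orderOf_of_odd_card (hodd : Odd (Nat.card H)) {x : G} (hx : x ∈ H) :
    Odd (orderOf x) :=
  hodd.of_dvd_nat (H.orderOf_dvd_natCard hx)

theorem notMem_of_orderOf_eq_two (hodd : Odd (Nat.card H)) {τ : G} (hτ : orderOf τ = 2) :
    τ ∉ H := fun hτH =>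
  Nat.not_odd_iff_even.mpr even_two (hτ ▸ odd_orderOf_of_odd_card hodd hτH)

theorem exists_orderOf_eq_two_of_even_card [Finite G] (heven : Even (Nat.card H)) :
    ∃ τ ∈ H, orderOf τ = 2 := by
  have : Fact (Nat.Prime 2) := ⟨Nat.prime_two⟩
  obtain ⟨τ, hτ⟩ := exists_prime_orderOf_dvd_card' (G := H) 2 heven.two_dvd
  exact ⟨τ, τ.2, by rw [Subgroup.orderOf_coe, hτ]⟩

theorem conj_eq_or_eq_inv_of_index_two (hindex : H.index = 2)
    (hab : ∀ a b : H, a * b = b * a) {τ : G} (hτH : τ ∉ H)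
    (hτ : ∀ h ∈ H, τ * h * τ⁻¹ = h⁻¹) (g : G) {k : G} (hk : k ∈ H) :
    g * k * g⁻¹ = k ∨ g * k * g⁻¹ = k⁻¹ := by
  have comm : ∀ {a}, a ∈ H → ∀ {b}, b ∈ H → a * b = b * a := fun ha _ hb =>
    congrArg Subtype.val (hab ⟨_, ha⟩ ⟨_, hb⟩)
  by_cases hg : g ∈ H
  · left
    rw [comm hg hk, mul_inv_cancel_right]
  · right
    have hgτ : g * τ⁻¹ ∈ H := by
      rw [Subgroup.mul_mem_iff_of_index_two hindex]
      simp [hg, hτH]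
    calc g * k * g⁻¹ = (g * τ⁻¹) * (τ * k * τ⁻¹) * (g * τ⁻¹)⁻¹ := by group
      _ = k⁻¹ := by rw [hτ k hk, comm hgτ (inv_mem hk), mul_inv_cancel_right]

theorem normal_of_le_of_index_two (hindex : H.index = 2)
    (hab : ∀ a b : H, a * b = b * a) {τ : G} (hτH : τ ∉ H)
    (hτ : ∀ h ∈ H, τ * h * τ⁻¹ = h⁻¹) (hKH : K ≤ H) : K.Normal where
  conj_mem k hk g := by
    rcases conj_eq_or_eq_inv_of_index_two hindex hab hτH hτ g (hKH hk) with h | h <;>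
      rw [h]
    exacts [hk, inv_mem hk]

theorem normalizer_eq_self_of_index_two (hodd : Odd (Nat.card H)) (hindex : H.index = 2)
    {τ : G} (hτK : τ ∈ K) (hτH : τ ∉ H) (hτ : ∀ h ∈ H, τ * h * τ⁻¹ = h⁻¹) :
    Subgroup.normalizer (K : Set G) = K := by
  have mem_of_mem_H : ∀ g ∈ Subgroup.normalizer (K : Set G), g ∈ H → g ∈ K := by
    intro g hgN hgH
    have hconj : g * τ * g⁻¹ = g ^ 2 * τ := by
      calc g * τ * g⁻¹ = g * (τ * g⁻¹ * τ⁻¹) * τ := by group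
        _ = g ^ 2 * τ := by rw [hτ _ (inv_mem hgH), inv_inv, pow_two]
    have hsq : g ^ 2 ∈ K := by
      have h := (Subgroup.mem_normalizer_iff.mp hgN τ).mp hτK
      rw [hconj] at h
      simpa using mul_mem h (inv_mem hτK)
    exact mem_of_sq_mem_of_odd_orderOf hsq (odd_orderOf_of_odd_card hodd hgH)
  refine le_antisymm (fun g hgN => ?_) Subgroup.le_normalizer
  by_cases hgH : g ∈ H
  · exact mem_of_mem_H g hgN hgH
  · have hτg : τ * g ∈ H := by
      rw [Subgroup.mul_mem_iff_of_index_two hindex]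
      simp [hτH, hgH]
    have := mem_of_mem_H _ (mul_mem (Subgroup.le_normalizer hτK) hgN) hτg
    simpa using mul_mem (inv_mem hτK) this

end

theorem stmt_12_general {G : Type*} [Group G] [Finite G]
    (H : Subgroup G)
    (hab : ∀ a b : H, a * b = b * a)
    (hodd : Odd (Nat.card H))
    (hindex : H.index = 2)
    (hinv : ∀ φ : G, φ ^ 2 = 1 → φ ≠ 1 → ∀ h ∈ H, φ * h * φ⁻¹ = h⁻¹) :
    (∀ K : Subgroup G, Odd (Nat.card K) → K ≤ H ∧ K.Normal) ∧
    (∀ K : Subgroup G, Even (Nat.card K) → Subgroup.normalizer (K : Set G) = K) := by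
  have inverts : ∀ τ : G, orderOf τ = 2 → ∀ h ∈ H, τ * h * τ⁻¹ = h⁻¹ := fun τ hτ =>
    have : Fact (Nat.Prime 2) := ⟨Nat.prime_two⟩
    hinv τ (orderOf_eq_prime_iff.mp hτ).1 (orderOf_eq_prime_iff.mp hτ).2
  have heven : Even (Nat.card (⊤ : Subgroup G)) :=
    ⟨Nat.card H, by rw [Subgroup.card_top, ← H.index_mul_card, hindex, two_mul]⟩
  obtain ⟨τ, -, hτ⟩ := exists_orderOf_eq_two_of_even_card heven
  refine ⟨fun K hK => ?_, fun K hK => ?_⟩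
  · have hKH : K ≤ H := fun k hk =>
      mem_of_sq_mem_of_odd_orderOf (Subgroup.sq_mem_of_index_two hindex k)
        (odd_orderOf_of_odd_card hK hk)
    exact ⟨hKH, normal_of_le_of_index_two hindex hab (notMem_of_orderOf_eq_two hodd hτ)
      (inverts τ hτ) hKH⟩
  · obtain ⟨σ, hσK, hσ⟩ := exists_orderOf_eq_two_of_even_card hK
    exact normalizer_eq_self_of_index_two hodd hindex hσK (notMem_of_orderOf_eq_two hodd hσ)
      (inverts σ hσ)

theorem stmt_12 {G : Type*} [Group G] [Finite G]
    (H : Subgroup G) (hnorm : H.Normal)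
    (hab : ∀ a b : H, a * b = b * a)
    (hodd : Odd (Nat.card H))
    (hindex : H.index = 2)
    (hinv : ∀ φ : G, φ ^ 2 = 1 → φ ≠ 1 → ∀ h ∈ H, φ * h * φ⁻¹ = h⁻¹) :
    (∀ K : Subgroup G, Odd (Nat.card K) → K ≤ H ∧ K.Normal) ∧
    (∀ K : Subgroup G, Even (Nat.card K) → Subgroup.normalizer (K : Set G) = K) :=
  stmt_12_general H hab hodd hindex hinv
end

section
/- Let G be a finite group that is a semidirect product of an abelian normal subgroup H of odd order by a group of order 2 acting by inversion on H. If H₀ is a subgroup of G and n is a positive integer dividing |G| and divisible by |H₀|, then there exists a subgroup H₁ of G of order n containing H₀. -/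
/-!
Every element `x ∉ H` is an involution: `xσ ∈ H` is inverted by the involution `σ ∉ H`, which
forces `x = x⁻¹`. Hence every subgroup of `H` is normal in `G`. In a finite abelian group every
subgroup `B` lies in subgroups of all orders `m` with `|B| ∣ m ∣ |G|`, by lifting elements of prime
order from the quotient. For odd `n`, `H₀ ≤ H` and this applies inside `H`. For `n = 2m`, extend
the odd-order group `H₀ ⊓ H` to some `K ≤ H` of order `m` and take the preimage of `⟨τK⟩` for an
involution `τ ∉ H`, chosen in `H₀` when `H₀ ⊄ H`; it has order `2m` and contains `H₀`.
-/

namespace Subgroup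

variable {G : Type*} [Group G]

theorem exists_le_mem_card_eq_mul_orderOf (N : Subgroup G) [N.Normal] (g : G) :
    ∃ L : Subgroup G, N ≤ L ∧ g ∈ L ∧ Nat.card L = Nat.card N * orderOf (g : G ⧸ N) :=
  ⟨(zpowers (g : G ⧸ N)).comap (QuotientGroup.mk' N), QuotientGroup.le_comap_mk' _ _,
    mem_zpowers _, by
      rw [← Nat.card_zpowers]
      exact QuotientGroup.card_preimage_mk N (zpowers (g : G ⧸ N))⟩

theorem exists_le_mem_card_eq_two_mul (N : Subgroup G) [N.Normal] {τ : G} (hτ2 : τ ^ 2 = 1)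
    (hτN : τ ∉ N) : ∃ L : Subgroup G, N ≤ L ∧ τ ∈ L ∧ Nat.card L = 2 * Nat.card N := by
  obtain ⟨L, hNL, hτL, hL⟩ := N.exists_le_mem_card_eq_mul_orderOf τ
  have hτ : orderOf (τ : G ⧸ N) = 2 := orderOf_eq_prime
    (by rw [← QuotientGroup.mk_pow, hτ2, QuotientGroup.mk_one])
    (mt (QuotientGroup.eq_one_iff τ).1 hτN)
  exact ⟨L, hNL, hτL, by rw [hL, hτ, mul_comm]⟩

theorem exists_le_card_eq_of_dvd [IsMulCommutative G] [Finite G] (B : Subgroup G) {m : ℕ}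
    (hBm : Nat.card B ∣ m) (hmG : m ∣ Nat.card G) :
    ∃ C : Subgroup G, B ≤ C ∧ Nat.card C = m := by
  obtain ⟨k, rfl⟩ := hBm
  induction k using Nat.recOnMul generalizing B with
  | zero => simp [Nat.card_pos.ne'] at hmG
  | one => exact ⟨B, le_rfl, (mul_one _).symm⟩
  | prime p hp =>
    have : Fact p.Prime := ⟨hp⟩
    have hpQ : p ∣ Nat.card (G ⧸ B) := by
      rw [B.card_eq_card_quotient_mul_card_subgroup, mul_comm] at hmG
      exact Nat.dvd_of_mul_dvd_mul_right Nat.card_pos hmG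
    obtain ⟨x, hx⟩ := exists_prime_orderOf_dvd_card' p hpQ
    obtain ⟨g, rfl⟩ := QuotientGroup.mk_surjective x
    obtain ⟨L, hBL, -, hL⟩ := B.exists_le_mem_card_eq_mul_orderOf g
    exact ⟨L, hBL, hL.trans (by rw [hx])⟩
  | mul a b iha ihb =>
    obtain ⟨C, hBC, hC⟩ := iha B (dvd_trans ⟨b, by ring⟩ hmG)
    obtain ⟨D, hCD, hD⟩ := ihb C (by rwa [hC, mul_assoc])
    exact ⟨D, hBC.trans hCD, by rw [hD, hC, mul_assoc]⟩

theorem exists_le_le_card_eq_of_dvd [Finite G] (H : Subgroup G) [IsMulCommutative H]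
    {B : Subgroup G} (hBH : B ≤ H) {m : ℕ} (hBm : Nat.card B ∣ m) (hmH : m ∣ Nat.card H) :
    ∃ K : Subgroup G, B ≤ K ∧ K ≤ H ∧ Nat.card K = m := by
  obtain ⟨C, hBC, hC⟩ := (B.subgroupOf H).exists_le_card_eq_of_dvd
    (by rwa [Nat.card_congr (subgroupOfEquivOfLe hBH).toEquiv]) hmH
  refine ⟨C.map H.subtype, ?_, map_subtype_le C, ?_⟩
  · rw [← map_subgroupOf_eq_of_le hBH]
    exact map_mono hBC
  · rw [card_map_of_injective H.subtype_injective, hC]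

variable {H : Subgroup G}

theorem le_of_index_eq_two_of_odd_card (hindex : H.index = 2) {K : Subgroup G}
    (hK : Odd (Nat.card K)) : K ≤ H := by
  intro x hx
  obtain ⟨k, hk⟩ := hK
  have hpow : x ^ (2 * k + 1) ∈ H := by
    rw [← hk, ← K.coe_mk x hx, ← K.coe_pow, pow_card_eq_one', K.coe_one]
    exact H.one_mem
  rwa [pow_succ, pow_mul, H.mul_mem_cancel_left (pow_mem (sq_mem_of_index_two hindex x) k)]
    at hpow

theorem exists_sq_eq_one_not_mem [Finite G] (hindex : H.index = 2) (hodd : Odd (Nat.card H)) :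
    ∃ σ : G, σ ^ 2 = 1 ∧ σ ∉ H := by
  obtain ⟨σ, hσ⟩ := exists_prime_orderOf_dvd_card' (G := G) 2
    ⟨Nat.card H, by rw [← H.card_mul_index, hindex, mul_comm]⟩
  refine ⟨σ, hσ ▸ pow_orderOf_eq_one σ, fun hσH => hodd.not_two_dvd_nat ?_⟩
  exact hσ ▸ H.orderOf_dvd_natCard hσH

theorem sq_eq_one_of_not_mem (hindex : H.index = 2)
    (hinv : ∀ φ : G, φ ^ 2 = 1 → φ ≠ 1 → ∀ h ∈ H, φ * h * φ⁻¹ = h⁻¹)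
    {σ : G} (hσ2 : σ ^ 2 = 1) (hσH : σ ∉ H) {x : G} (hxH : x ∉ H) : x ^ 2 = 1 := by
  have hσ1 : σ ≠ 1 := fun h => hσH (h ▸ H.one_mem)
  have hσinv : σ⁻¹ = σ := inv_eq_of_mul_eq_one_right (by rw [← pow_two, hσ2])
  have hxσ : x * σ ∈ H := (mul_mem_iff_of_index_two hindex).2 (iff_of_false hxH hσH)
  have h : σ * x = σ * x⁻¹ := by
    have h := hinv σ hσ2 hσ1 _ hxσ
    rwa [mul_inv_rev, hσinv, mul_assoc, mul_assoc, ← pow_two, hσ2, mul_one] at h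
  rw [pow_two, mul_eq_one_iff_eq_inv]
  exact mul_left_cancel h

theorem normal_of_le [IsMulCommutative H] (hindex : H.index = 2)
    (hinv : ∀ φ : G, φ ^ 2 = 1 → φ ≠ 1 → ∀ h ∈ H, φ * h * φ⁻¹ = h⁻¹)
    {σ : G} (hσ2 : σ ^ 2 = 1) (hσH : σ ∉ H) {K : Subgroup G} (hKH : K ≤ H) : K.Normal where
  conj_mem k hk g := by
    by_cases hgH : g ∈ H
    · rwa [setLike_mul_comm hgH (hKH hk), mul_inv_cancel_right]
    · rw [hinv g (sq_eq_one_of_not_mem hindex hinv hσ2 hσH hgH) (fun h => hgH (h ▸ H.one_mem))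
        k (hKH hk)]
      exact K.inv_mem hk

theorem le_of_inf_le_of_mem (hindex : H.index = 2) {H₀ L : Subgroup G} {τ : G}
    (hτH₀ : τ ∈ H₀) (hτH : τ ∉ H) (hτL : τ ∈ L) (h : H₀ ⊓ H ≤ L) : H₀ ≤ L := by
  intro x hx
  by_cases hxH : x ∈ H
  · exact h ⟨hx, hxH⟩
  · have hxτ : x * τ ∈ L :=
      h ⟨H₀.mul_mem hx hτH₀, (mul_mem_iff_of_index_two hindex).2 (iff_of_false hxH hτH)⟩
    simpa using L.mul_mem hxτ (L.inv_mem hτL)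

theorem exists_card_eq_two_mul_le [Finite G] [IsMulCommutative H] (hindex : H.index = 2)
    (hodd : Odd (Nat.card H))
    (hinv : ∀ φ : G, φ ^ 2 = 1 → φ ≠ 1 → ∀ h ∈ H, φ * h * φ⁻¹ = h⁻¹)
    (H₀ : Subgroup G) {m : ℕ} (hmH : m ∣ Nat.card H) (hH₀m : Nat.card H₀ ∣ 2 * m) :
    ∃ L : Subgroup G, Nat.card L = 2 * m ∧ H₀ ≤ L := by
  obtain ⟨σ, hσ2, hσH⟩ := exists_sq_eq_one_not_mem hindex hodd
  have hB : Nat.card ↥(H₀ ⊓ H) ∣ m :=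
    (hodd.of_dvd_nat (card_dvd_of_le inf_le_right)).coprime_two_right.dvd_of_dvd_mul_left
      ((card_dvd_of_le inf_le_left).trans hH₀m)
  obtain ⟨τ, hτ2, hτH, hH₀τ⟩ : ∃ τ : G, τ ^ 2 = 1 ∧ τ ∉ H ∧
      ∀ L : Subgroup G, H₀ ⊓ H ≤ L → τ ∈ L → H₀ ≤ L := by
    by_cases hH₀H : H₀ ≤ H
    · exact ⟨σ, hσ2, hσH, fun L h _ => (le_inf le_rfl hH₀H).trans h⟩
    · obtain ⟨τ, hτH₀, hτH⟩ := SetLike.not_le_iff_exists.1 hH₀H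
      exact ⟨τ, sq_eq_one_of_not_mem hindex hinv hσ2 hσH hτH, hτH,
        fun L h hτL => le_of_inf_le_of_mem hindex hτH₀ hτH hτL h⟩
  obtain ⟨K, hK, hKH, hKcard⟩ := H.exists_le_le_card_eq_of_dvd inf_le_right hB hmH
  have := normal_of_le hindex hinv hσ2 hσH hKH
  obtain ⟨L, hKL, hτL, hL⟩ := K.exists_le_mem_card_eq_two_mul hτ2 fun h => hτH (hKH h)
  exact ⟨L, by rw [hL, hKcard], hH₀τ L (hK.trans hKL) hτL⟩

end Subgroup

open Subgroup

theorem stmt_13_general {G : Type*} [Group G] [Finite G]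
    (H : Subgroup G)
    (hab : ∀ a b : H, a * b = b * a)
    (hodd : Odd (Nat.card H))
    (hindex : H.index = 2)
    (hinv : ∀ φ : G, φ ^ 2 = 1 → φ ≠ 1 → ∀ h ∈ H, φ * h * φ⁻¹ = h⁻¹)
    (H₀ : Subgroup G) (n : ℕ)
    (hndvd : n ∣ Nat.card G) (hH₀dvd : Nat.card H₀ ∣ n) :
    ∃ H₁ : Subgroup G, Nat.card H₁ = n ∧ H₀ ≤ H₁ := by
  have : IsMulCommutative H := .of_comm hab
  have hcardG : Nat.card G = 2 * Nat.card H := by rw [← H.card_mul_index, hindex, mul_comm]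
  rcases Nat.even_or_odd n with hn | hn
  · obtain ⟨m, rfl⟩ := hn.two_dvd
    exact exists_card_eq_two_mul_le hindex hodd hinv H₀
      (Nat.dvd_of_mul_dvd_mul_left two_pos (hcardG ▸ hndvd)) hH₀dvd
  · have hH₀H := le_of_index_eq_two_of_odd_card hindex (hn.of_dvd_nat hH₀dvd)
    have hnH : n ∣ Nat.card H := hn.coprime_two_right.dvd_of_dvd_mul_left (hcardG ▸ hndvd)
    obtain ⟨K, hK, -, hKcard⟩ := H.exists_le_le_card_eq_of_dvd hH₀H hH₀dvd hnH
    exact ⟨K, hKcard, hK⟩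

theorem stmt_13 {G : Type*} [Group G] [Finite G]
    (H : Subgroup G) (hnorm : H.Normal)
    (hab : ∀ a b : H, a * b = b * a)
    (hodd : Odd (Nat.card H))
    (hindex : H.index = 2)
    (hinv : ∀ φ : G, φ ^ 2 = 1 → φ ≠ 1 → ∀ h ∈ H, φ * h * φ⁻¹ = h⁻¹)
    (H₀ : Subgroup G) (n : ℕ) (hnpos : 0 < n)
    (hndvd : n ∣ Nat.card G) (hH₀dvd : Nat.card H₀ ∣ n) :
    ∃ H₁ : Subgroup G, Nat.card H₁ = n ∧ H₀ ≤ H₁ :=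
  stmt_13_general H hab hodd hindex hinv H₀ n hndvd hH₀dvd
end

section
/- Let Φ be a field of characteristic different from p (p prime), let Φ_p = Φ(ε_p) where ε_p is a primitive p-th root of unity, and let m = [Φ_p : Φ], which divides p−1. Let φ be a generator of Gal(Φ_p/Φ) with φ(ε_p) = ε_p^s. For 0 ≤ i ≤ m−1 define V_i = {α ∈ Φ_p* : φ(α)·α^{−s^i} ∈ Φ_p*^p}. Then the Φ_p*^p-cosets of the V_i give a direct sum decomposition: the 𝔽_p-vector space Φ_p*/Φ_p*^p is the direct sum of the subspaces V_i/Φ_p*^p for i = 0,…,m−1. -/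
/-!
Modulo `p`-th powers, `Fˣ` becomes an `𝔽_p`-vector space on which `φ` acts linearly with
`φ ^ m = 1`, `m = [F : Φ]`. Since `F = Φ(ε)`, the cyclotomic character is injective, so `s` has
multiplicative order exactly `m` in `𝔽_p`. Hence `X ^ m - 1 = ∏ (X - s ^ i)` is a product of
pairwise coprime linear factors; the kernel of a product of coprime polynomials in `φ` is the
sum of their kernels, and eigenspaces for distinct eigenvalues are independent. So the quotient
is the direct sum of the `s ^ i`-eigenspaces of `φ`, which are exactly the images of the `V i`.
-/

open Polynomial

theorem IsPrimitiveRoot.injective_pow_fin {M : Type*} [CommMonoid M] {ζ : M} {m : ℕ}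
    (hζ : IsPrimitiveRoot ζ m) : Function.Injective fun i : Fin m => ζ ^ (i : ℕ) :=
  fun i j h => Fin.ext (hζ.pow_inj i.2 j.2 h)

theorem Polynomial.ker_aeval_prod_eq_iSup {R M ι : Type*} [CommRing R] [AddCommGroup M]
    [Module R M] (f : Module.End R M) (s : Finset ι) (g : ι → R[X])
    (hg : (s : Set ι).Pairwise fun i j => IsCoprime (g i) (g j)) :
    LinearMap.ker (aeval f (∏ i ∈ s, g i)) = ⨆ i ∈ s, LinearMap.ker (aeval f (g i)) := by
  classical
  induction s using Finset.induction_on with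
  | empty => rw [Finset.prod_empty, map_one, Module.End.one_eq_id, LinearMap.ker_id]; simp
  | insert a s ha ih =>
    have hcop : IsCoprime (g a) (∏ i ∈ s, g i) := IsCoprime.prod_right fun i hi =>
      hg (by simp) (by simp [hi]) (by rintro rfl; exact ha hi)
    rw [Finset.prod_insert ha, ← sup_ker_aeval_eq_ker_aeval_mul_of_coprime f hcop,
      ih (hg.mono (by simp)), Finset.iSup_insert]

namespace Module.End

variable {K V : Type*} [Field K] [AddCommGroup V] [Module K V]

theorem iSup_eigenspace_pow_eq_top {f : End K V} {ζ : K} {m : ℕ} [NeZero m]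
    (hζ : IsPrimitiveRoot ζ m) (hf : f ^ m = 1) :
    ⨆ i : Fin m, f.eigenspace (ζ ^ (i : ℕ)) = ⊤ := by
  have hprod : X ^ m - C 1 = ∏ i : Fin m, (X - C (ζ ^ (i : ℕ))) := by
    rw [Fin.prod_univ_eq_prod_range (fun i => X - C (ζ ^ i)),
      X_pow_sub_C_eq_prod hζ (NeZero.pos m) (one_pow m)]
    simp_rw [mul_one]
  have := ker_aeval_prod_eq_iSup f Finset.univ _ fun i _ j _ hij =>
    pairwise_coprime_X_sub_C hζ.injective_pow_fin hij
  rw [← hprod] at this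
  simp only [map_sub, aeval_X_pow, aeval_X, aeval_C, map_one, hf, sub_self,
    LinearMap.ker_zero, Finset.mem_univ, iSup_pos] at this
  simpa only [eigenspace_def, Algebra.algebraMap_eq_smul_one] using this.symm

theorem existsUnique_sum_eigenvector {f : End K V} {ζ : K} {m : ℕ} [NeZero m]
    (hζ : IsPrimitiveRoot ζ m) (hf : f ^ m = 1) (v : V) :
    ∃! w : Fin m → V, (∀ i, f (w i) = ζ ^ (i : ℕ) • w i) ∧ ∑ i, w i = v := by
  have hind : iSupIndep fun i : Fin m => f.eigenspace (ζ ^ (i : ℕ)) :=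
    f.eigenspaces_iSupIndep.comp hζ.injective_pow_fin
  have hv : v ∈ ⨆ i ∈ Finset.univ, f.eigenspace (ζ ^ ((i : Fin m) : ℕ)) := by
    simp [iSup_eigenspace_pow_eq_top hζ hf]
  obtain ⟨w, hw⟩ := (Submodule.mem_iSup_finset_iff_exists_sum _ v).mp hv
  refine ⟨fun i => w i, ⟨fun i => mem_eigenspace_iff.mp (w i).2, hw⟩, ?_⟩
  rintro w' ⟨hw'f, hw'v⟩
  funext i
  exact (iSupIndep_iff_finsetSum_eq_imp_eq _).mp hind Finset.univ w' (fun i => w i)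
    (fun i _ => ⟨mem_eigenspace_iff.mpr (hw'f i), (w i).2⟩) (hw'v.trans hw.symm) i
    (Finset.mem_univ i)

end Module.End

theorem CommGroup.existsUnique_prod_eigenvector {p : ℕ} [Fact p.Prime] {W : Type*}
    [CommGroup W] (hW : ∀ a : W, a ^ p = 1) {ψ : Monoid.End W} {m s : ℕ} [NeZero m]
    (hs : IsPrimitiveRoot (s : ZMod p) m) (hψ : ψ ^ m = 1) (q : W) :
    ∃! w : Fin m → W, (∀ i : Fin m, ψ (w i) = w i ^ s ^ (i : ℕ)) ∧ ∏ i, w i = q := by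
  have : Module (ZMod p) (Additive W) :=
    AddCommGroup.zmodModule fun a => by rw [← ofMul_toMul a, ← ofMul_pow, hW, ofMul_one]
  let f : Module.End (ZMod p) (Additive W) := (MonoidHom.toAdditive ψ).toZModLinearMap p
  have hf_iterate (n : ℕ) (a : W) :
      (f ^ n) (Additive.ofMul a) = Additive.ofMul ((ψ ^ n) a) := by
    induction n with
    | zero => rfl
    | succ n ih => rw [pow_succ', Module.End.mul_apply, ih, pow_succ']; rfl
  have hf : f ^ m = 1 := LinearMap.ext fun a => by
    rw [← ofMul_toMul a, hf_iterate, hψ]; rfl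
  refine ((Equiv.piCongrRight fun _ => Additive.ofMul).existsUnique_congr fun w => ?_).mpr
    (Module.End.existsUnique_sum_eigenvector hs hf (.ofMul q))
  have hf_apply (a : W) : f (Additive.ofMul a) = Additive.ofMul (ψ a) := rfl
  simp only [Equiv.piCongrRight_apply, Pi.map_apply, hf_apply, ← Nat.cast_pow,
    Nat.cast_smul_eq_nsmul, ← ofMul_pow, ← ofMul_prod, EmbeddingLike.apply_eq_iff_eq]

theorem Monoid.End.pow_eq_one_of_semiconj {G H : Type*} [Monoid G] [Monoid H] {π : G → H}
    (hπ : Function.Surjective π) {g : Monoid.End G} {ψ : Monoid.End H}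
    (h : Function.Semiconj π g ψ) {m : ℕ} (hg : g ^ m = 1) : ψ ^ m = 1 := by
  refine DFunLike.coe_injective (funext (hπ.forall.mpr fun a => ?_))
  rw [Monoid.End.coe_pow, ← h.iterate_right m a, ← Monoid.End.coe_pow, hg]
  rfl

theorem powMonoidHom_range_le_comap {G : Type*} [CommGroup G] (n : ℕ) (g : G →* G) :
    (powMonoidHom n : G →* G).range ≤ (powMonoidHom n : G →* G).range.comap g := by
  rintro _ ⟨γ, rfl⟩
  exact ⟨g γ, (map_pow g γ n).symm⟩

theorem QuotientGroup.map_mk_eq_pow_iff {G : Type*} [CommGroup G] {n : ℕ} (g : G →* G) (a : G)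
    (k : ℕ) :
    QuotientGroup.map _ _ g (powMonoidHom_range_le_comap n g)
        (a : G ⧸ (powMonoidHom n : G →* G).range) =
          (a : G ⧸ (powMonoidHom n : G →* G).range) ^ k ↔
      ∃ γ : G, g a = a ^ k * γ ^ n := by
  rw [map_mk, ← QuotientGroup.mk_pow, eq_comm, QuotientGroup.eq]
  simp only [MonoidHom.mem_range, powMonoidHom_apply, eq_inv_mul_iff_mul_eq, eq_comm]

theorem QuotientGroup.pow_eq_one_of_range_powMonoidHom {G : Type*} [CommGroup G] {n : ℕ}
    (x : G ⧸ (powMonoidHom n : G →* G).range) : x ^ n = 1 :=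
  QuotientGroup.induction_on x fun a => by
    rw [← QuotientGroup.mk_pow, QuotientGroup.eq_one_iff]
    exact ⟨a, rfl⟩

theorem IsCyclotomicExtension.of_adjoin_eq_top {Φ F : Type*} [Field Φ] [Field F]
    [Algebra Φ F] {n : ℕ} [NeZero n] {ε : F} (hε : IsPrimitiveRoot ε n)
    (h : IntermediateField.adjoin Φ {ε} = ⊤) : IsCyclotomicExtension {n} Φ F := by
  refine (IsCyclotomicExtension.iff_singleton n Φ F).mpr ⟨⟨ε, hε⟩, fun x => ?_⟩
  have hx : x ∈ (IntermediateField.adjoin Φ {ε}).toSubalgebra := h ▸ IntermediateField.mem_top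
  rw [IntermediateField.adjoin_simple_toSubalgebra_of_isAlgebraic
    (hε.isIntegral (NeZero.pos n)).tower_top.isAlgebraic] at hx
  exact Algebra.adjoin_mono (by simpa using hε.pow_eq_one) hx

theorem orderOf_eq_finrank_of_forall_mem_zpowers {Φ F : Type*} [Field Φ] [Field F]
    [Algebra Φ F] [IsGalois Φ F] [FiniteDimensional Φ F] {φ : F ≃ₐ[Φ] F}
    (hφ : ∀ ψ, ψ ∈ Subgroup.zpowers φ) : orderOf φ = Module.finrank Φ F := by
  rw [orderOf_eq_card_of_forall_mem_zpowers hφ, IsGalois.card_aut_eq_finrank]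

theorem IsPrimitiveRoot.natCast_of_forall_mem_zpowers {Φ F : Type*} [Field Φ] [Field F]
    [Algebra Φ F] [IsGalois Φ F] {p : ℕ} [NeZero p] [IsCyclotomicExtension {p} Φ F] {ε : F}
    (hε : IsPrimitiveRoot ε p) {φ : F ≃ₐ[Φ] F} (hφ : ∀ ψ, ψ ∈ Subgroup.zpowers φ) {s : ℕ}
    (hs : φ ε = ε ^ s) : IsPrimitiveRoot (s : ZMod p) (Module.finrank Φ F) := by
  have := IsCyclotomicExtension.finiteDimensional {p} Φ F
  set χ := hε.autToPow Φ
  have hχ : ((χ φ : (ZMod p)ˣ) : ZMod p) = s := by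
    have h : ε ^ (χ φ : ZMod p).val = ε ^ s := by rw [IsPrimitiveRoot.autToPow_spec Φ hε, hs]
    rw [(hε.isOfFinOrder (NeZero.ne p)).pow_eq_pow_iff_modEq, ← hε.eq_orderOf,
      ← ZMod.natCast_eq_natCast_iff] at h
    rwa [ZMod.natCast_zmod_val] at h
  have horder : orderOf (χ φ) = Module.finrank Φ F := by
    rw [orderOf_injective χ (hε.autToPow_injective Φ) φ,
      orderOf_eq_finrank_of_forall_mem_zpowers hφ]
  rw [← hχ, ← horder, ← orderOf_units]
  exact IsPrimitiveRoot.orderOf _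

namespace AlgEquiv

variable {Φ F : Type*} [Field Φ] [Field F] [Algebra Φ F]

def unitsModPowEnd (p : ℕ) (φ : F ≃ₐ[Φ] F) :
    Monoid.End (Fˣ ⧸ (powMonoidHom p : Fˣ →* Fˣ).range) :=
  QuotientGroup.map _ _ (MulDistribMulAction.toMonoidEnd _ Fˣ φ) (powMonoidHom_range_le_comap p _)

theorem unitsModPowEnd_pow_eq_one {p m : ℕ} {φ : F ≃ₐ[Φ] F} (hφ : φ ^ m = 1) :
    φ.unitsModPowEnd p ^ m = 1 :=
  Monoid.End.pow_eq_one_of_semiconj QuotientGroup.mk_surjective (fun _ => rfl)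
    (by rw [← map_pow, hφ, map_one])

theorem unitsModPowEnd_eq_pow_iff {p : ℕ} (φ : F ≃ₐ[Φ] F)
    (x : Fˣ ⧸ (powMonoidHom p : Fˣ →* Fˣ).range) (k : ℕ) :
    φ.unitsModPowEnd p x = x ^ k ↔ ∃ α : Fˣ, QuotientGroup.mk α = x ∧
      ∃ γ : F, γ ≠ 0 ∧ φ (α : F) = (α : F) ^ k * γ ^ p := by
  constructor
  · obtain ⟨α, rfl⟩ := QuotientGroup.mk_surjective x
    intro h
    obtain ⟨γ, hγ⟩ := (QuotientGroup.map_mk_eq_pow_iff _ α k).mp h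
    exact ⟨α, rfl, γ, γ.ne_zero, by simpa using congr_arg Units.val hγ⟩
  · rintro ⟨α, rfl, γ, hγ, h⟩
    exact (QuotientGroup.map_mk_eq_pow_iff _ α k).mpr
      ⟨Units.mk0 γ hγ, Units.ext (by simpa using h)⟩

end AlgEquiv

theorem stmt_14_general {Φ F : Type*} [Field Φ] [Field F] [Algebra Φ F]
    (p : ℕ) (hp : p.Prime)
    (ε : F) (hε : IsPrimitiveRoot ε p)
    (hFgen : IntermediateField.adjoin Φ {ε} = ⊤)  -- `F = Φ(ε_p)`
    [IsGalois Φ F] (m : ℕ) (hm : Module.finrank Φ F = m)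
    (φ : F ≃ₐ[Φ] F) (hφgen : ∀ ψ : F ≃ₐ[Φ] F, ψ ∈ Subgroup.zpowers φ)
    (s : ℕ) (hs : φ ε = ε ^ s) :
    -- the `𝔽_p`-vector space `F*/F*^p` is the (internal) direct sum of the images of
    -- the `V i`, `i = 0, …, m-1`: every element decomposes uniquely as a product
    ∀ q : Fˣ ⧸ (powMonoidHom p : Fˣ →* Fˣ).range,
      ∃! w : Fin m → Fˣ ⧸ (powMonoidHom p : Fˣ →* Fˣ).range,
        (∀ i : Fin m, ∃ α : Fˣ, QuotientGroup.mk α = w i ∧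
          ∃ γ : F, γ ≠ 0 ∧ φ (α : F) = (α : F) ^ (s ^ (i : ℕ)) * γ ^ p) ∧
        (∏ i, w i) = q := by
  intro q
  subst hm
  have : Fact p.Prime := ⟨hp⟩
  have := IsCyclotomicExtension.of_adjoin_eq_top hε hFgen
  have := IsCyclotomicExtension.finiteDimensional {p} Φ F
  have : NeZero (Module.finrank Φ F) := ⟨Module.finrank_pos.ne'⟩
  have hφ : φ ^ Module.finrank Φ F = 1 := by
    rw [← orderOf_eq_finrank_of_forall_mem_zpowers hφgen]
    exact pow_orderOf_eq_one φ
  refine (existsUnique_congr fun w : Fin _ → _ => and_congr_left' (forall_congr' fun i =>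
    φ.unitsModPowEnd_eq_pow_iff (w i) _)).mp ?_
  exact CommGroup.existsUnique_prod_eigenvector QuotientGroup.pow_eq_one_of_range_powMonoidHom
    (hε.natCast_of_forall_mem_zpowers hφgen hs) (φ.unitsModPowEnd_pow_eq_one hφ) q

theorem stmt_14 {Φ F : Type*} [Field Φ] [Field F] [Algebra Φ F]
    (p : ℕ) (hp : p.Prime) (hchar : ringChar Φ ≠ p)
    (ε : F) (hε : IsPrimitiveRoot ε p)
    (hFgen : IntermediateField.adjoin Φ {ε} = ⊤)  -- `F = Φ(ε_p)`
    [IsGalois Φ F] (m : ℕ) (hm : Module.finrank Φ F = m) (hmdvd : m ∣ p - 1)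
    (φ : F ≃ₐ[Φ] F) (hφgen : ∀ ψ : F ≃ₐ[Φ] F, ψ ∈ Subgroup.zpowers φ)
    (s : ℕ) (hs : φ ε = ε ^ s) :
    -- the `𝔽_p`-vector space `F*/F*^p` is the (internal) direct sum of the images of
    -- the `V i`, `i = 0, …, m-1`: every element decomposes uniquely as a product
    ∀ q : Fˣ ⧸ (powMonoidHom p : Fˣ →* Fˣ).range,
      ∃! w : Fin m → Fˣ ⧸ (powMonoidHom p : Fˣ →* Fˣ).range,
        (∀ i : Fin m, ∃ α : Fˣ, QuotientGroup.mk α = w i ∧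
          ∃ γ : F, γ ≠ 0 ∧ φ (α : F) = (α : F) ^ (s ^ (i : ℕ)) * γ ^ p) ∧
        (∏ i, w i) = q :=
  stmt_14_general p hp ε hε hFgen m hm φ hφgen s hs
end

section
/- With Φ, p, ε_p, Φ_p = Φ(ε_p), m = [Φ_p:Φ], φ, s, and V_i as above, let β ∈ Φ_p* \ Φ_p*^p and let L = Φ_p(η_p) where η_p^p = β. Then L/Φ is a Galois extension if and only if β ∈ V_j for some index j. -/
/-!
By Kummer theory, `L/F` is cyclic of degree `p`, and every `θ ∈ L` with `θ ^ p ∈ F` has the form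
`w * η ^ a` with `w ∈ F`.

If `L/Φ` is Galois, a lift `τ` of `φ` sends `η` to such an element, so `φ β = β ^ a * w ^ p`.
Iterating `m` times gives `β = β ^ (a ^ m) * d ^ p`; as `β` is not a `p`-th power this forces
`a ^ m ≡ 1 [MOD p]`, and since `s` has order exactly `m` in `(ZMod p)ˣ`, `a ≡ s ^ j` for some
`j < m`.

Conversely, if `φ β = β ^ t * γ ^ p`, every conjugate `φ ^ k β` is `β ^ (t ^ k)` times a `p`-th
power, hence has a `p`-th root in `L`. So `L` is the splitting field over `Φ` of
`∏ g, (X ^ p - C (g β))`, whose coefficients are Galois invariant, hence in `Φ`.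
-/

open IntermediateField Polynomial

theorem AlgEquiv.exists_pow_apply_eq_pow_pow_mul_pow {K F : Type*} [CommSemiring K]
    [CommSemiring F] [Algebra K F] (ψ : F ≃ₐ[K] F) {x γ : F} {t n : ℕ}
    (h : ψ x = x ^ t * γ ^ n) (k : ℕ) : ∃ d : F, (ψ ^ k) x = x ^ t ^ k * d ^ n := by
  induction k with
  | zero => exact ⟨1, by simp⟩
  | succ k ih =>
    obtain ⟨d, hd⟩ := ih
    refine ⟨γ ^ t ^ k * ψ d, ?_⟩
    rw [pow_succ', AlgEquiv.mul_apply, hd, map_mul, map_pow, map_pow, h, pow_succ]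
    ring

theorem AlgEquiv.eq_one_of_apply_eq {K F : Type*} [Field K] [Field F] [Algebra K F] {ε : F}
    (hε : IsAlgebraic K ε) (hgen : K⟮ε⟯ = ⊤) {ψ : F ≃ₐ[K] F} (h : ψ ε = ε) : ψ = 1 := by
  have : Algebra.adjoin K {ε} = ⊤ := by
    rw [← adjoin_simple_toSubalgebra_of_isAlgebraic hε, hgen, top_toSubalgebra]
  exact AlgEquiv.coe_toAlgHom_injective <|
    AlgHom.ext_of_adjoin_eq_top this fun x hx ↦ by rw [Set.mem_singleton_iff.1 hx]; exact h

theorem IntermediateField.adjoin_algebraMap_pair_eq_top {K F L : Type*} [Field K] [Field F]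
    [Field L] [Algebra K F] [Algebra F L] [Algebra K L] [IsScalarTower K F L] {ε : F} {η : L}
    (hε : K⟮ε⟯ = ⊤) (hη : F⟮η⟯ = ⊤) : K⟮algebraMap F L ε, η⟯ = ⊤ := by
  have hF : Set.range (algebraMap F L) ⊆ K⟮algebraMap F L ε, η⟯ := by
    have : (IsScalarTower.toAlgHom K F L).fieldRange ≤ K⟮algebraMap F L ε, η⟯ := by
      rw [AlgHom.fieldRange_eq_map, ← hε, adjoin_map, adjoin_le_iff]
      simp [subset_adjoin K _ (Set.mem_insert _ _)]
    exact fun x ⟨y, hy⟩ ↦ this ⟨y, hy⟩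
  have hηmem : η ∈ K⟮algebraMap F L ε, η⟯ := subset_adjoin K _ (Set.mem_insert_of_mem _ rfl)
  refine eq_top_iff.2 fun x _ ↦ ?_
  have hx : x ∈ F⟮η⟯.toSubfield := by rw [hη]; trivial
  rw [adjoin_toSubfield] at hx
  exact Subfield.closure_le.2 (Set.union_subset hF (Set.singleton_subset_iff.2 hηmem)) hx

theorem exists_map_eq_prod_X_pow_sub_C {K F : Type*} [Field K] [Field F] [Algebra K F]
    [FiniteDimensional K F] [IsGalois K F] (n : ℕ) (x : F) :
    ∃ f : K[X], f.map (algebraMap K F) = ∏ g : F ≃ₐ[K] F, (X ^ n - C (g x)) := by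
  set q := ∏ g : F ≃ₐ[K] F, (X ^ n - C (g x))
  have hq (ψ : F ≃ₐ[K] F) : q.map (ψ : F →+* F) = q := by
    simp only [q, Polynomial.map_prod, Polynomial.map_sub, Polynomial.map_pow, map_X, map_C]
    exact Fintype.prod_equiv (Equiv.mulLeft ψ) _ _ fun g ↦ rfl
  refine mem_lifts _ |>.1 <| (lifts_iff_coeff_lifts q).2 fun k ↦
    (IsGalois.mem_range_algebraMap_iff_fixed _).2 fun ψ ↦ ?_
  simpa using congrArg (coeff · k) (hq ψ)

theorem dvd_of_zpow_eq_pow {F : Type*} [Field F] {p : ℕ} (hp : p.Prime) {β c : F}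
    (hβ : ∀ γ : F, γ ^ p ≠ β) {e : ℤ} (he : β ^ e = c ^ p) : (p : ℤ) ∣ e := by
  by_contra hpe
  obtain ⟨u, v, huv⟩ := ((Nat.prime_iff_prime_int.mp hp).irreducible.coprime_iff_not_dvd).2 hpe
  have hβ0 : β ≠ 0 := by rintro rfl; exact hβ 0 (zero_pow hp.ne_zero)
  apply hβ (β ^ u * c ^ v)
  calc (β ^ u * c ^ v) ^ p = β ^ (u * p) * (c ^ p) ^ v := by
        rw [mul_pow, ← zpow_natCast (β ^ u), ← zpow_natCast (c ^ v), ← zpow_natCast c p,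
          ← zpow_mul, ← zpow_mul, ← zpow_mul, mul_comm v]
    _ = β := by rw [← he, ← zpow_mul, ← zpow_add₀ hβ0, mul_comm e, huv, zpow_one]

theorem isSplittingField_X_pow_sub_C_of_adjoin_eq_top {K L : Type*} [Field K] [Field L]
    [Algebra K L] {n : ℕ} {ζ a : K} {α : L} (hζ : IsPrimitiveRoot ζ n) (hn : 0 < n)
    (hα : α ^ n = algebraMap K L a) (hgen : K⟮α⟯ = ⊤) : IsSplittingField K L (X ^ n - C a) := by
  have hroot : α ∈ (X ^ n - C a).rootSet L := by
    rw [mem_rootSet_of_ne (X_pow_sub_C_ne_zero hn a)]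
    simp [hα]
  have hαalg : IsAlgebraic K α := ⟨_, X_pow_sub_C_ne_zero hn a, (mem_rootSet.1 hroot).2⟩
  constructor
  · simpa using X_pow_sub_C_splits_of_isPrimitiveRoot
      (hζ.map_of_injective (algebraMap K L).injective) hα
  · rw [eq_top_iff, ← top_toSubalgebra, ← hgen, adjoin_simple_toSubalgebra_of_isAlgebraic hαalg]
    exact Algebra.adjoin_mono (Set.singleton_subset_iff.2 hroot)

theorem exists_eq_algebraMap_mul_pow_of_pow_eq {K L : Type*} [Field K] [Field L] [Algebra K L]
    {n : ℕ} [NeZero n] {ζ a : K} {α : L} (hζ : IsPrimitiveRoot ζ n)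
    (H : Irreducible (X ^ n - C a)) [IsSplittingField K L (X ^ n - C a)]
    (hα : α ^ n = algebraMap K L a) (hα0 : α ≠ 0) {θ : L} {b : K}
    (hθ : θ ^ n = algebraMap K L b) : ∃ (w : K) (k : ℕ), θ = algebraMap K L w * α ^ k := by
  rcases eq_or_ne θ 0 with rfl | hθ0
  · exact ⟨0, 0, by simp⟩
  have := IsSplittingField.finiteDimensional L (X ^ n - C a)
  have := isGalois_of_isSplittingField_X_pow_sub_C
    ⟨ζ, (mem_primitiveRoots (NeZero.pos n)).2 hζ⟩ H L
  set A := autEquivZmod H L hζ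
  set σ := A.symm (Multiplicative.ofAdd 1)
  have hσα : σ α = algebraMap K L ζ * α := by
    simpa [Algebra.smul_def] using autEquivZmod_symm_apply_natCast H L hα hζ 1
  have hσgen : ∀ g : L ≃ₐ[K] L, g ∈ Subgroup.zpowers σ := fun g ↦ by
    obtain ⟨k, hk⟩ := ZMod.intCast_surjective (Multiplicative.toAdd (A g))
    refine ⟨k, ?_⟩
    rw [← A.symm_apply_apply g, ← ofAdd_toAdd (A g), ← hk, ← zsmul_one, ofAdd_zsmul, map_zpow]
  have hζL := hζ.map_of_injective (algebraMap K L).injective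
  obtain ⟨k, -, hk⟩ := hζL.eq_pow_of_pow_eq_one (ξ := σ θ * θ⁻¹) <| by
    rw [mul_pow, inv_pow, ← map_pow, hθ, AlgEquiv.commutes, ← hθ,
      mul_inv_cancel₀ (pow_ne_zero _ hθ0)]
  -- `σ` multiplies `α` by `ζ` and `θ` by `ζ ^ k`, so it fixes `θ / α ^ k`.
  have hσu : σ • (θ * (α ^ k)⁻¹) = θ * (α ^ k)⁻¹ := by
    have hζ0 : algebraMap K L ζ ≠ 0 := hζL.ne_zero (NeZero.ne n)
    rw [AlgEquiv.smul_def, map_mul, map_inv₀, map_pow, hσα, mul_pow,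
      (mul_inv_eq_iff_eq_mul₀ hθ0).1 hk.symm]
    field_simp
  obtain ⟨w, hw⟩ := (IsGalois.mem_range_algebraMap_iff_fixed _).2 fun g ↦
    Subgroup.zpowers_le.2 (MulAction.mem_stabilizer_iff.2 hσu) (hσgen g)
  exact ⟨w, k, by rw [hw, inv_mul_cancel_right₀ (pow_ne_zero _ hα0)]⟩

theorem exists_apply_eq_pow_mul_pow_of_normal {K F L : Type*} [Field K] [Field F] [Field L]
    [Algebra K F] [Algebra F L] [Algebra K L] [IsScalarTower K F L] [Normal K F] [Normal K L]
    {n : ℕ} [NeZero n] {ζ β : F} (hζ : IsPrimitiveRoot ζ n) (H : Irreducible (X ^ n - C β))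
    [IsSplittingField F L (X ^ n - C β)] {η : L} (hη : η ^ n = algebraMap F L β) (hη0 : η ≠ 0)
    (φ : F ≃ₐ[K] F) : ∃ (a : ℕ) (w : F), w ≠ 0 ∧ φ β = β ^ a * w ^ n := by
  obtain ⟨τ, hτ⟩ := AlgEquiv.restrictNormalHom_surjective (K₁ := F) L φ
  have hτF (x : F) : τ (algebraMap F L x) = algebraMap F L (φ x) := by
    rw [← hτ]
    exact (AlgEquiv.restrictNormal_commutes τ F x).symm
  obtain ⟨w, a, hw⟩ := exists_eq_algebraMap_mul_pow_of_pow_eq hζ H hη hη0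
    (θ := τ η) (b := φ β) (by rw [← map_pow, hη, hτF])
  refine ⟨a, w, fun hw0 ↦ by simp [hw0, hη0] at hw, (algebraMap F L).injective ?_⟩
  rw [← hτF, ← hη, map_pow, hw, mul_pow, ← pow_mul, mul_comm a, pow_mul, hη]
  simp [mul_comm]

theorem isPrimitiveRoot_natCast_orderOf {K F : Type*} [Field K] [Field F] [Algebra K F]
    {p s : ℕ} [NeZero p] {ε : F} (hε : IsPrimitiveRoot ε p) (hgen : K⟮ε⟯ = ⊤) (φ : F ≃ₐ[K] F)
    (hφ : φ ε = ε ^ s) : IsPrimitiveRoot (s : ZMod p) (orderOf φ) := by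
  have hpow : ∀ k : ℕ, (φ ^ k) ε = ε ^ s ^ k := by
    intro k
    induction k with
    | zero => simp
    | succ k ih => rw [pow_succ', AlgEquiv.mul_apply, ih, map_pow, hφ, ← pow_mul, ← pow_succ']
  rw [← (orderOf_eq_orderOf_iff (x := (s : ZMod p))).2 fun k ↦ ?_]
  · exact IsPrimitiveRoot.orderOf _
  rw [← Nat.cast_pow, ← Nat.cast_one, ZMod.natCast_eq_natCast_iff, hε.eq_orderOf,
    ← (hε.isOfFinOrder (NeZero.ne p)).pow_eq_pow_iff_modEq, pow_one, ← hpow]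
  have hεalg := ((hε.isIntegral (NeZero.pos p)).tower_top (A := K)).isAlgebraic
  exact ⟨AlgEquiv.eq_one_of_apply_eq hεalg hgen, fun h ↦ by rw [h, AlgEquiv.one_apply]⟩

theorem exists_lt_apply_eq_pow_pow_mul_pow {K F : Type*} [Field K] [Field F] [Algebra K F]
    {p s m a : ℕ} [NeZero m] (hp : p.Prime) (hs : IsPrimitiveRoot (s : ZMod p) m)
    (φ : F ≃ₐ[K] F) (hφ : φ ^ m = 1) {β w : F} (hβ : ∀ γ : F, γ ^ p ≠ β) (hw : w ≠ 0)
    (h : φ β = β ^ a * w ^ p) : ∃ j < m, ∃ γ : F, γ ≠ 0 ∧ φ β = β ^ s ^ j * γ ^ p := by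
  have := Fact.mk hp
  have hβ0 : β ≠ 0 := by rintro rfl; exact hβ 0 (zero_pow hp.ne_zero)
  obtain ⟨d, hd⟩ := φ.exists_pow_apply_eq_pow_pow_mul_pow h m
  rw [hφ, AlgEquiv.one_apply] at hd
  have hd0 : d ≠ 0 := by
    rintro rfl
    exact hβ0 (by simpa [hp.ne_zero] using hd)
  have hdvd : (p : ℤ) ∣ ((a ^ m : ℕ) : ℤ) - 1 := by
    refine dvd_of_zpow_eq_pow hp hβ (c := d⁻¹) ?_
    rw [zpow_sub₀ hβ0, zpow_one, zpow_natCast]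
    nth_rewrite 2 [hd]
    field_simp
    rw [one_div, inv_pow, mul_inv_cancel₀ (pow_ne_zero _ hd0)]
  have ha : (a : ZMod p) ^ m = 1 := by
    rw [← sub_eq_zero]
    exact_mod_cast (ZMod.intCast_zmod_eq_zero_iff_dvd _ p).2 hdvd
  obtain ⟨j, hj, hsj⟩ := hs.eq_pow_of_pow_eq_one ha
  obtain ⟨c, hc⟩ := (ZMod.intCast_eq_intCast_iff_dvd_sub ((s ^ j : ℕ) : ℤ) a p).1
    (by exact_mod_cast hsj)
  refine ⟨j, hj, w * β ^ c, mul_ne_zero hw (zpow_ne_zero c hβ0), ?_⟩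
  calc φ β = β ^ ((s ^ j : ℕ) + (p * c : ℤ)) * w ^ p := by
        rw [← hc, add_sub_cancel, zpow_natCast, h]
    _ = β ^ s ^ j * (w * β ^ c) ^ p := by
        rw [zpow_add₀ hβ0, zpow_natCast, mul_comm (p : ℤ) c, zpow_mul, zpow_natCast]
        ring

theorem normal_of_apply_eq_pow_mul_pow {K F L : Type*} [Field K] [Field F] [Field L]
    [Algebra K F] [Algebra F L] [Algebra K L] [IsScalarTower K F L]
    [FiniteDimensional K F] [IsGalois K F] {n : ℕ} [NeZero n] {ε : F} (hε : IsPrimitiveRoot ε n)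
    (hFgen : K⟮ε⟯ = ⊤) (φ : F ≃ₐ[K] F) (hφgen : ∀ ψ : F ≃ₐ[K] F, ψ ∈ Subgroup.zpowers φ)
    {β : F} {η : L} (hη : η ^ n = algebraMap F L β) (hη0 : η ≠ 0) (hLgen : F⟮η⟯ = ⊤)
    {t : ℕ} {γ : F} (h : φ β = β ^ t * γ ^ n) : Normal K L := by
  obtain ⟨f, hf⟩ := exists_map_eq_prod_X_pow_sub_C (K := K) n β
  have hfL : f.map (algebraMap K L) = ∏ g : F ≃ₐ[K] F, (X ^ n - C (algebraMap F L (g β))) := by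
    rw [IsScalarTower.algebraMap_eq K F L, ← Polynomial.map_map, hf]
    simp [Polynomial.map_prod]
  have hmonic : (∏ g : F ≃ₐ[K] F, (X ^ n - C (g β))).Monic :=
    monic_prod_of_monic _ _ fun g _ ↦ monic_X_pow_sub_C (g β) (NeZero.ne n)
  have hf0 : f ≠ 0 := by
    rintro rfl
    exact hmonic.ne_zero (by rw [← hf, Polynomial.map_zero])
  have hεL := hε.map_of_injective (algebraMap F L).injective
  have hsplits : (f.map (algebraMap K L)).Splits := by
    rw [hfL]
    refine Splits.prod fun g _ ↦ ?_
    obtain ⟨k, rfl⟩ := mem_powers_iff_mem_zpowers.2 (hφgen g)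
    obtain ⟨d, hd⟩ := φ.exists_pow_apply_eq_pow_pow_mul_pow h k
    refine X_pow_sub_C_splits_of_isPrimitiveRoot hεL (α := η ^ t ^ k * algebraMap F L d) ?_
    rw [mul_pow, ← pow_mul, mul_comm (t ^ k) n, pow_mul, hη, ← map_pow, ← map_pow, ← map_mul]
    exact congrArg _ hd.symm
  have hroot {ζ : F} (hζ : ζ ^ n = 1) : algebraMap F L ζ * η ∈ f.rootSet L := by
    refine (mem_rootSet.2 ⟨hf0, ?_⟩)
    rw [aeval_def, ← eval_map, hfL, eval_prod]
    exact Finset.prod_eq_zero (Finset.mem_univ 1) (by simp [mul_pow, ← map_pow, hζ, hη])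
  have hεη := hroot hε.pow_eq_one
  have hηroot := one_mul η ▸ map_one (algebraMap F L) ▸ hroot (one_pow n)
  have : IsSplittingField K L f := by
    refine isSplittingField_iff_intermediateField.2 ⟨hsplits, top_unique ?_⟩
    rw [← adjoin_algebraMap_pair_eq_top hFgen hLgen, adjoin_le_iff, Set.insert_subset_iff,
      Set.singleton_subset_iff]
    have hηT := subset_adjoin K _ hηroot
    refine ⟨?_, hηT⟩
    simpa [hη0] using mul_mem (subset_adjoin K _ hεη) (inv_mem hηT)
  exact Normal.of_isSplittingField f

theorem stmt_15_general {Φ F L : Type*} [Field Φ] [Field F] [Field L]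
    [Algebra Φ F] [Algebra F L] [Algebra Φ L] [IsScalarTower Φ F L]
    (p : ℕ) (hp : p.Prime)
    (ε : F) (hε : IsPrimitiveRoot ε p)
    (hFgen : IntermediateField.adjoin Φ {ε} = ⊤)  -- `F = Φ(ε_p)`
    [IsGalois Φ F] (m : ℕ) (hm : Module.finrank Φ F = m)
    (φ : F ≃ₐ[Φ] F) (hφgen : ∀ ψ : F ≃ₐ[Φ] F, ψ ∈ Subgroup.zpowers φ)
    (s : ℕ) (hs : φ ε = ε ^ s)
    (β : F) (hβnp : ∀ γ : F, γ ^ p ≠ β)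
    (η : L) (hη : η ^ p = algebraMap F L β)
    (hLgen : IntermediateField.adjoin F {η} = ⊤)  -- `L = Φ_p(η_p)`
    :
    IsGalois Φ L ↔ ∃ j : ℕ, j < m ∧ ∃ γ : F, γ ≠ 0 ∧ φ β = β ^ (s ^ j) * γ ^ p := by
  have : NeZero p := ⟨hp.ne_zero⟩
  have : FiniteDimensional Φ F := by
    have := adjoin.finiteDimensional ((hε.isIntegral hp.pos).tower_top (A := Φ))
    rw [hFgen] at this
    exact topEquiv.toLinearEquiv.finiteDimensional
  have : NeZero m := ⟨hm ▸ Module.finrank_pos.ne'⟩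
  have hη0 : η ≠ 0 := by
    rintro rfl
    exact hβnp 0 ((algebraMap F L).injective (by simpa [hp.ne_zero] using hη))
  have hirr := X_pow_sub_C_irreducible_of_prime hp hβnp
  have := isSplittingField_X_pow_sub_C_of_adjoin_eq_top hε hp.pos hη hLgen
  have : IsGalois F L := isGalois_of_isSplittingField_X_pow_sub_C
    ⟨ε, (mem_primitiveRoots hp.pos).2 hε⟩ hirr L
  have hφord : orderOf φ = m := by
    rw [orderOf_eq_card_of_forall_mem_zpowers hφgen, IsGalois.card_aut_eq_finrank, hm]
  constructor
  · intro
    obtain ⟨a, w, hw0, hφβ⟩ := exists_apply_eq_pow_mul_pow_of_normal hε hirr hη hη0 φ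
    exact exists_lt_apply_eq_pow_pow_mul_pow hp
      (hφord ▸ isPrimitiveRoot_natCast_orderOf hε hFgen φ hs) φ (hφord ▸ pow_orderOf_eq_one φ)
      hβnp hw0 hφβ
  · rintro ⟨j, -, γ, -, h⟩
    have := normal_of_apply_eq_pow_mul_pow hε hFgen φ hφgen hη hη0 hLgen h
    have := Algebra.IsSeparable.trans Φ F L
    exact ⟨⟩

theorem stmt_15 {Φ F L : Type*} [Field Φ] [Field F] [Field L]
    [Algebra Φ F] [Algebra F L] [Algebra Φ L] [IsScalarTower Φ F L]
    (p : ℕ) (hp : p.Prime) (hchar : ringChar Φ ≠ p)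
    (ε : F) (hε : IsPrimitiveRoot ε p)
    (hFgen : IntermediateField.adjoin Φ {ε} = ⊤)  -- `F = Φ(ε_p)`
    [IsGalois Φ F] (m : ℕ) (hm : Module.finrank Φ F = m) (hmdvd : m ∣ p - 1)
    (φ : F ≃ₐ[Φ] F) (hφgen : ∀ ψ : F ≃ₐ[Φ] F, ψ ∈ Subgroup.zpowers φ)
    (s : ℕ) (hs : φ ε = ε ^ s)
    (β : F) (hβ : β ≠ 0) (hβnp : ∀ γ : F, γ ^ p ≠ β)
    (η : L) (hη : η ^ p = algebraMap F L β)
    (hLgen : IntermediateField.adjoin F {η} = ⊤)  -- `L = Φ_p(η_p)`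
    :
    IsGalois Φ L ↔ ∃ j : ℕ, j < m ∧ ∃ γ : F, γ ≠ 0 ∧ φ β = β ^ (s ^ j) * γ ^ p :=
  stmt_15_general p hp ε hε hFgen m hm φ hφgen s hs β hβnp η hη hLgen
end

section
/- With notation as above (Φ of characteristic ≠ p, Φ_p = Φ(ε_p), Gal(Φ_p/Φ) = ⟨φ⟩ of order m, φ(ε_p) = ε_p^s, V_i the eigenspaces in Φ_p*/Φ_p*^p), let β ∈ Φ_p* \ Φ_p*^p and L = Φ_p(β^{1/p}). Then L/Φ is a cyclic (Galois) extension of degree pm if and only if β ∈ V_1, i.e., φ(β)β^{−s} ∈ Φ_p*^p. -/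
/-!
Write `ζ` for the image of `ε` in `L`, and let `ψ ∈ Aut(L/Φ)` restrict to `φ` on `F`.

If `Gal(L/Φ)` is abelian, `ψ` commutes with every `σ ∈ Gal(L/F)`. Since `σ η = ζ ^ i * η` and
`ψ ζ = ζ ^ s`, the element `ψ η / η ^ s` is fixed by `Gal(L/F)`, hence equals some `γ ∈ F`, and
taking `p`-th powers gives `φ β = β ^ s * γ ^ p`.

Conversely, if `φ β = β ^ s * γ ^ p` then `φ` lifts to `ψ` with `ψ η = η ^ s * γ`, which commutes
with the generator `σ : η ↦ ζ * η` of `Gal(L/F)`. As `ψ ^ m` fixes `F`, it is a power of `σ`, so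
`ψ ^ p` has order `m`; since `m ∣ p - 1` is prime to `p`, `ψ ^ p * σ` has order `m * p = [L : Φ]`.
So `Aut(L/Φ)` is cyclic of order `[L : Φ]`, and `L/Φ` is Galois.
-/

open Polynomial IntermediateField

theorem IsPrimitiveRoot.exists_pow_mul_eq_of_pow_eq {K : Type*} [Field K] {n : ℕ} [NeZero n]
    {ζ x y : K} (hζ : IsPrimitiveRoot ζ n) (hy : y ≠ 0) (h : x ^ n = y ^ n) :
    ∃ i < n, ζ ^ i * y = x := by
  obtain ⟨i, hi, hζi⟩ := hζ.eq_pow_of_pow_eq_one (ξ := x / y) (by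
    rw [div_pow, h, div_self (pow_ne_zero n hy)])
  exact ⟨i, hi, by rw [hζi, div_mul_cancel₀ x hy]⟩

theorem orderOf_pow_orderOf_mul_eq_mul {G H : Type*} [Group G] [Monoid H] (f : G →* H) {x y : G}
    (hxy : Commute x y) (hcop : (orderOf (f x)).Coprime (orderOf y))
    (hx : x ^ orderOf (f x) ∈ Subgroup.zpowers y) :
    orderOf (x ^ orderOf y * y) = orderOf (f x) * orderOf y := by
  have hxk : orderOf (x ^ orderOf y) = orderOf (f x) := by
    apply Nat.dvd_antisymm
    · obtain ⟨j, hj⟩ := hx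
      apply orderOf_dvd_of_pow_eq_one
      rw [← pow_mul, mul_comm, pow_mul, ← hj, ← zpow_natCast, ← zpow_mul, mul_comm,
        zpow_mul, zpow_natCast, pow_orderOf_eq_one, one_zpow]
    · calc orderOf (f x) = orderOf (f (x ^ orderOf y)) := by rw [map_pow, hcop.orderOf_pow]
        _ ∣ orderOf (x ^ orderOf y) := orderOf_map_dvd f _
  rw [(hxy.pow_left _).orderOf_mul_eq_mul_orderOf_of_coprime (hxk ▸ hcop), hxk]

theorem isGalois_isCyclic_of_orderOf_eq_finrank {K E : Type*} [Field K] [Field E] [Algebra K E]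
    [FiniteDimensional K E] (σ : E ≃ₐ[K] E) (hσ : orderOf σ = Module.finrank K E) :
    IsGalois K E ∧ IsCyclic (E ≃ₐ[K] E) := by
  have hcard : Nat.card (E ≃ₐ[K] E) = Module.finrank K E := by
    refine le_antisymm ?_ (hσ ▸ orderOf_le_card)
    rw [Nat.card_eq_fintype_card]
    exact AlgEquiv.card_le
  exact ⟨IsGalois.of_card_aut_eq_finrank K E hcard,
    isCyclic_of_orderOf_eq_card σ (hσ.trans hcard.symm)⟩

theorem algEquiv_ext_of_adjoin_simple_eq_top {Φ F L : Type*} [Field Φ] [Field F] [Field L]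
    [Algebra F L] [Algebra Φ L] {η : L} (hL : F⟮η⟯ = ⊤) {f g : L ≃ₐ[Φ] L}
    (hF : ∀ a : F, f (algebraMap F L a) = g (algebraMap F L a)) (hη : f η = g η) : f = g := by
  let E : IntermediateField F L :=
    (RingHom.eqLocusField (f : L →+* L) (g : L →+* L)).toIntermediateField hF
  have hle : F⟮η⟯ ≤ E := adjoin_simple_le_iff.mpr hη
  ext x
  exact hle (hL ▸ mem_top : x ∈ F⟮η⟯)

section Tower

variable {Φ F L : Type*} [Field Φ] [Field F] [Field L]
  [Algebra Φ F] [Algebra F L] [Algebra Φ L] [IsScalarTower Φ F L]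

theorem exists_algEquiv_lift_of_eval₂_minpoly [Algebra.IsAlgebraic Φ L] {η : L}
    (hη : IsIntegral F η) (hL : F⟮η⟯ = ⊤) (ρ : F →ₐ[Φ] F) {x : L}
    (hx : (minpoly F η).eval₂ ((algebraMap F L).comp ρ) x = 0) :
    ∃ ψ : L ≃ₐ[Φ] L, ψ η = x ∧ ∀ a : F, ψ (algebraMap F L a) = algebraMap F L (ρ a) := by
  let e : AdjoinRoot (minpoly F η) ≃ₐ[F] L :=
    ((adjoinRootEquivAdjoin F hη).trans (equivOfEq hL)).trans topEquiv
  have he : e (AdjoinRoot.root _) = η := by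
    simp [e, adjoinRootEquivAdjoin_apply_root]
  let ψ : L →+* L := (AdjoinRoot.lift _ x hx).comp (e.symm : L →+* AdjoinRoot (minpoly F η))
  have hψF (a : F) : ψ (algebraMap F L a) = algebraMap F L (ρ a) := by
    simp [ψ]
  let ψΦ : L →ₐ[Φ] L :=
    { ψ with commutes' := fun c => by simp [IsScalarTower.algebraMap_apply Φ F L, hψF] }
  refine ⟨AlgEquiv.ofBijective ψΦ (Algebra.IsAlgebraic.algHom_bijective ψΦ), ?_, hψF⟩
  simp [ψΦ, ψ, ← he]

section Normal

variable [Normal Φ F] {η : L}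

theorem algebraMap_restrictNormalHom_apply (ψ : L ≃ₐ[Φ] L) (a : F) :
    algebraMap F L (AlgEquiv.restrictNormalHom F ψ a) = ψ (algebraMap F L a) :=
  ψ.restrictNormal_commutes F a

theorem ext_of_restrictNormalHom_eq (hL : F⟮η⟯ = ⊤) {f g : L ≃ₐ[Φ] L}
    (hr : AlgEquiv.restrictNormalHom F f = AlgEquiv.restrictNormalHom F g) (hη : f η = g η) :
    f = g :=
  algEquiv_ext_of_adjoin_simple_eq_top hL
    (fun a => by rw [← algebraMap_restrictNormalHom_apply, hr, algebraMap_restrictNormalHom_apply])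
    hη

theorem pow_apply_eq_pow_mul {σ : L ≃ₐ[Φ] L} (hσ : AlgEquiv.restrictNormalHom F σ = 1) {c : F}
    (hση : σ η = algebraMap F L c * η) (k : ℕ) : (σ ^ k) η = algebraMap F L c ^ k * η := by
  have hσF (a : F) : σ (algebraMap F L a) = algebraMap F L a := by
    rw [← algebraMap_restrictNormalHom_apply, hσ]
    rfl
  induction k with
  | zero => simp
  | succ k ih =>
    rw [pow_succ', AlgEquiv.mul_apply, ih, map_mul, ← map_pow, hσF, hση, map_pow]
    ring

end Normal

namespace Kummer

variable {p : ℕ} {β : F} {η : L}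

theorem ne_zero (hp : p ≠ 0) (hβ : β ≠ 0) (hη : η ^ p = algebraMap F L β) : η ≠ 0 := by
  rintro rfl
  exact hβ ((map_eq_zero _).mp (by rw [← hη, zero_pow hp]))

theorem minpoly_eq (hp : p.Prime) (hβ : ∀ γ : F, γ ^ p ≠ β) (hη : η ^ p = algebraMap F L β) :
    minpoly F η = X ^ p - C β :=
  (minpoly.eq_of_irreducible_of_monic (X_pow_sub_C_irreducible_of_prime hp hβ)
    (by simp [hη]) (monic_X_pow_sub_C β hp.ne_zero)).symm

theorem isIntegral (hp : p ≠ 0) (hη : η ^ p = algebraMap F L β) : IsIntegral F η :=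
  ⟨X ^ p - C β, monic_X_pow_sub_C β hp, by simp [hη]⟩

theorem finiteDimensional (hp : p ≠ 0) (hη : η ^ p = algebraMap F L β) (hL : F⟮η⟯ = ⊤) :
    FiniteDimensional F L := by
  have := adjoin.finiteDimensional (isIntegral hp hη)
  rw [hL] at this
  exact topEquiv.toLinearEquiv.finiteDimensional

theorem finrank_eq (hp : p.Prime) (hβ : ∀ γ : F, γ ^ p ≠ β) (hη : η ^ p = algebraMap F L β)
    (hL : F⟮η⟯ = ⊤) : Module.finrank F L = p := by
  rw [← finrank_top', ← hL, adjoin.finrank (isIntegral hp.ne_zero hη), minpoly_eq hp hβ hη,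
    natDegree_X_pow_sub_C]

theorem exists_apply_eq_pow_mul_algebraMap [NeZero p] [IsGalois F L] [FiniteDimensional F L]
    {ε : F} (hε : IsPrimitiveRoot ε p) (hη0 : η ≠ 0) (hη : η ^ p = algebraMap F L β) {s : ℕ}
    (ψ : L ≃ₐ[Φ] L) (hψε : ψ (algebraMap F L ε) = algebraMap F L ε ^ s)
    (hcomm : ∀ σ : L ≃ₐ[F] L, Commute ψ (σ.restrictScalars Φ)) :
    ∃ γ : F, ψ η = η ^ s * algebraMap F L γ := by
  have hζ : IsPrimitiveRoot (algebraMap F L ε) p := hε.map_of_injective (algebraMap F L).injective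
  suffices hfix : ∀ σ : L ≃ₐ[F] L, σ (ψ η / η ^ s) = ψ η / η ^ s by
    obtain ⟨γ, hγ⟩ := (IsGalois.mem_range_algebraMap_iff_fixed _).mpr hfix
    exact ⟨γ, by rw [hγ, mul_div_cancel₀ _ (pow_ne_zero s hη0)]⟩
  intro σ
  obtain ⟨i, -, hi⟩ := hζ.exists_pow_mul_eq_of_pow_eq hη0 (x := σ η)
    (by rw [← map_pow, hη, AlgEquiv.commutes])
  have hσψ : σ (ψ η) = ψ (σ η) := congr($(hcomm σ) η).symm
  rw [map_div₀, map_pow, hσψ, ← hi, map_mul, map_pow, hψε, mul_pow, ← pow_mul, ← pow_mul,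
    mul_comm s i]
  exact mul_div_mul_left _ _ (pow_ne_zero _ (hζ.ne_zero (NeZero.ne p)))

section Normal

variable [Normal Φ F]

theorem exists_restrictNormalHom_eq [Algebra.IsAlgebraic Φ L] (hp : p.Prime)
    (hβ : ∀ γ : F, γ ^ p ≠ β) (hη : η ^ p = algebraMap F L β) (hL : F⟮η⟯ = ⊤) (ρ : F ≃ₐ[Φ] F)
    {x : L} (hx : x ^ p = algebraMap F L (ρ β)) :
    ∃ ψ : L ≃ₐ[Φ] L, ψ η = x ∧ AlgEquiv.restrictNormalHom F ψ = ρ := by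
  obtain ⟨ψ, hψη, hψF⟩ := exists_algEquiv_lift_of_eval₂_minpoly (isIntegral hp.ne_zero hη) hL
    (ρ : F →ₐ[Φ] F) (x := x) (by simp [minpoly_eq hp hβ hη, hx])
  refine ⟨ψ, hψη, AlgEquiv.ext fun a => (algebraMap F L).injective ?_⟩
  rw [algebraMap_restrictNormalHom_apply, hψF]
  rfl

variable {ε : F}

theorem exists_generator [Algebra.IsAlgebraic Φ L] (hp : p.Prime) (hβ0 : β ≠ 0)
    (hβ : ∀ γ : F, γ ^ p ≠ β) (hη : η ^ p = algebraMap F L β) (hL : F⟮η⟯ = ⊤)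
    (hε : IsPrimitiveRoot ε p) :
    ∃ σ : L ≃ₐ[Φ] L, AlgEquiv.restrictNormalHom F σ = 1 ∧ σ η = algebraMap F L ε * η ∧
      orderOf σ = p := by
  have : Fact p.Prime := ⟨hp⟩
  obtain ⟨σ, hση, hσ⟩ := exists_restrictNormalHom_eq hp hβ hη hL (1 : F ≃ₐ[Φ] F)
    (x := algebraMap F L ε * η)
    (by rw [mul_pow, ← map_pow, hε.pow_eq_one, map_one, one_mul, hη]; rfl)
  refine ⟨σ, hσ, hση, orderOf_eq_prime (ext_of_restrictNormalHom_eq hL ?_ ?_) ?_⟩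
  · simp [hσ]
  · rw [pow_apply_eq_pow_mul hσ hση, ← map_pow, hε.pow_eq_one, map_one, one_mul]
    rfl
  · rintro rfl
    have hζ : algebraMap F L ε = 1 :=
      mul_right_cancel₀ (ne_zero hp.ne_zero hβ0 hη) (hση.symm.trans (one_mul η).symm)
    exact hε.ne_one hp.one_lt ((map_eq_one_iff _ (algebraMap F L).injective).mp hζ)

theorem mem_zpowers_of_restrictNormalHom_eq_one (hp : p ≠ 0) (hβ0 : β ≠ 0)
    (hη : η ^ p = algebraMap F L β) (hL : F⟮η⟯ = ⊤) (hε : IsPrimitiveRoot ε p)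
    {σ : L ≃ₐ[Φ] L} (hσ : AlgEquiv.restrictNormalHom F σ = 1) (hση : σ η = algebraMap F L ε * η)
    {τ : L ≃ₐ[Φ] L} (hτ : AlgEquiv.restrictNormalHom F τ = 1) : τ ∈ Subgroup.zpowers σ := by
  have : NeZero p := ⟨hp⟩
  have hτβ : (τ η) ^ p = η ^ p := by
    rw [← map_pow, hη, ← algebraMap_restrictNormalHom_apply, hτ]
    rfl
  obtain ⟨i, -, hi⟩ := (hε.map_of_injective (algebraMap F L).injective).exists_pow_mul_eq_of_pow_eq
    (ne_zero hp hβ0 hη) hτβ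
  refine ⟨i, ext_of_restrictNormalHom_eq hL (by simp [hσ, hτ]) ?_⟩
  show (σ ^ (i : ℤ)) η = τ η
  rw [zpow_natCast, pow_apply_eq_pow_mul hσ hση, hi]

theorem commute_of_apply_eq (hL : F⟮η⟯ = ⊤) {σ : L ≃ₐ[Φ] L}
    (hσ : AlgEquiv.restrictNormalHom F σ = 1) (hση : σ η = algebraMap F L ε * η)
    {φ : F ≃ₐ[Φ] F} {s : ℕ} (hs : φ ε = ε ^ s) {ψ : L ≃ₐ[Φ] L}
    (hψ : AlgEquiv.restrictNormalHom F ψ = φ) {γ : F} (hψη : ψ η = η ^ s * algebraMap F L γ) :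
    Commute ψ σ := by
  refine ext_of_restrictNormalHom_eq hL (by simp [hσ, hψ]) ?_
  have hσγ : σ (algebraMap F L γ) = algebraMap F L γ := by
    rw [← algebraMap_restrictNormalHom_apply, hσ]
    rfl
  rw [AlgEquiv.mul_apply, AlgEquiv.mul_apply, hση, map_mul, hψη,
    ← algebraMap_restrictNormalHom_apply, hψ, hs, map_pow (algebraMap F L), map_mul σ, map_pow σ,
    hση, hσγ]
  ring

theorem isGalois_isCyclic_of_eq_pow_mul_pow [IsGalois Φ F] [FiniteDimensional Φ F]
    (hp : p.Prime) (hβ0 : β ≠ 0) (hβ : ∀ γ : F, γ ^ p ≠ β) (hη : η ^ p = algebraMap F L β)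
    (hL : F⟮η⟯ = ⊤) (hε : IsPrimitiveRoot ε p) {φ : F ≃ₐ[Φ] F}
    (hφ : orderOf φ = Module.finrank Φ F) (hcop : (Module.finrank Φ F).Coprime p) {s : ℕ}
    (hs : φ ε = ε ^ s) {γ : F} (hγ : φ β = β ^ s * γ ^ p) :
    IsGalois Φ L ∧ IsCyclic (L ≃ₐ[Φ] L) ∧ Module.finrank Φ L = p * Module.finrank Φ F := by
  have := finiteDimensional hp.ne_zero hη hL
  have : FiniteDimensional Φ L := Module.Finite.trans F L
  have hrank : Module.finrank Φ L = p * Module.finrank Φ F := by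
    rw [← Module.finrank_mul_finrank Φ F L, finrank_eq hp hβ hη hL, mul_comm]
  obtain ⟨σ, hσ, hση, hσp⟩ := exists_generator (Φ := Φ) hp hβ0 hβ hη hL hε
  obtain ⟨ψ, hψη, hψ⟩ := exists_restrictNormalHom_eq hp hβ hη hL φ (x := η ^ s * algebraMap F L γ)
    (by rw [mul_pow, ← pow_mul, mul_comm s p, pow_mul, hη, ← map_pow, ← map_pow, ← map_mul, hγ])
  have hθ := orderOf_pow_orderOf_mul_eq_mul (AlgEquiv.restrictNormalHom F)
    (commute_of_apply_eq hL hσ hση hs hψ hψη) (by rwa [hψ, hφ, hσp])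
    (mem_zpowers_of_restrictNormalHom_eq_one hp.ne_zero hβ0 hη hL hε hσ hση
      (by rw [map_pow, pow_orderOf_eq_one]))
  rw [hψ, hφ, hσp, mul_comm, ← hrank] at hθ
  obtain ⟨hGal, hCyc⟩ := isGalois_isCyclic_of_orderOf_eq_finrank _ hθ
  exact ⟨hGal, hCyc, hrank⟩

theorem exists_eq_pow_mul_pow_of_isMulCommutative [IsGalois Φ L] [IsMulCommutative (L ≃ₐ[Φ] L)]
    (hp : p ≠ 0) (hβ0 : β ≠ 0) (hη : η ^ p = algebraMap F L β) (hL : F⟮η⟯ = ⊤)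
    (hε : IsPrimitiveRoot ε p) (φ : F ≃ₐ[Φ] F) {s : ℕ} (hs : φ ε = ε ^ s) :
    ∃ γ : F, γ ≠ 0 ∧ φ β = β ^ s * γ ^ p := by
  have : NeZero p := ⟨hp⟩
  have : IsGalois F L := IsGalois.tower_top_of_isGalois Φ F L
  have := finiteDimensional hp hη hL
  have hη0 := ne_zero hp hβ0 hη
  obtain ⟨ψ, hψ⟩ := AlgEquiv.restrictNormalHom_surjective L φ
  obtain ⟨γ, hγ⟩ := exists_apply_eq_pow_mul_algebraMap hε hη0 hη ψ
    (by rw [← algebraMap_restrictNormalHom_apply, hψ, hs, map_pow]) (fun σ => mul_comm' _ _)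
  refine ⟨γ, fun h0 => ?_, (algebraMap F L).injective ?_⟩
  · rw [h0, map_zero, mul_zero] at hγ
    exact hη0 (ψ.injective (hγ.trans (map_zero ψ).symm))
  · rw [← hψ, algebraMap_restrictNormalHom_apply, ← hη, map_pow, hγ, map_mul, map_pow, map_pow,
      ← hη, mul_pow, ← pow_mul, ← pow_mul, mul_comm s p]

end Normal

end Kummer

end Tower

theorem stmt_16_general {Φ F L : Type*} [Field Φ] [Field F] [Field L]
    [Algebra Φ F] [Algebra F L] [Algebra Φ L] [IsScalarTower Φ F L]
    (p : ℕ) (hp : p.Prime)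
    (ε : F) (hε : IsPrimitiveRoot ε p)
    [IsGalois Φ F] (m : ℕ) (hm : Module.finrank Φ F = m) (hmdvd : m ∣ p - 1)
    (φ : F ≃ₐ[Φ] F) (hφgen : ∀ ψ : F ≃ₐ[Φ] F, ψ ∈ Subgroup.zpowers φ)
    (s : ℕ) (hs : φ ε = ε ^ s)
    (β : F) (hβ : β ≠ 0) (hβnp : ∀ γ : F, γ ^ p ≠ β)
    (η : L) (hη : η ^ p = algebraMap F L β)
    (hLgen : IntermediateField.adjoin F {η} = ⊤)  -- `L = Φ_p(η_p)`
    :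
    (IsGalois Φ L ∧ IsCyclic (L ≃ₐ[Φ] L) ∧ Module.finrank Φ L = p * m) ↔
      ∃ γ : F, γ ≠ 0 ∧ φ β = β ^ s * γ ^ p := by
  subst hm
  have hm0 : Module.finrank Φ F ≠ 0 := fun h => by
    rw [h, zero_dvd_iff] at hmdvd
    have := hp.two_le
    omega
  have : FiniteDimensional Φ F := Module.finite_of_finrank_pos (Nat.pos_of_ne_zero hm0)
  have hφ : orderOf φ = Module.finrank Φ F := by
    rw [orderOf_eq_card_of_forall_mem_zpowers hφgen, IsGalois.card_aut_eq_finrank]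
  have hcop : (Module.finrank Φ F).Coprime p :=
    Nat.Coprime.coprime_dvd_left hmdvd
      ((Nat.coprime_self_sub_left hp.one_le).mpr (Nat.coprime_one_left p))
  constructor
  · rintro ⟨_, _, -⟩
    exact Kummer.exists_eq_pow_mul_pow_of_isMulCommutative hp.ne_zero hβ hη hLgen hε φ hs
  · rintro ⟨γ, -, hγ⟩
    exact Kummer.isGalois_isCyclic_of_eq_pow_mul_pow hp hβ hβnp hη hLgen hε hφ hcop hs hγ

theorem stmt_16 {Φ F L : Type*} [Field Φ] [Field F] [Field L]
    [Algebra Φ F] [Algebra F L] [Algebra Φ L] [IsScalarTower Φ F L]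
    (p : ℕ) (hp : p.Prime) (hchar : ringChar Φ ≠ p)
    (ε : F) (hε : IsPrimitiveRoot ε p)
    (hFgen : IntermediateField.adjoin Φ {ε} = ⊤)  -- `F = Φ(ε_p)`
    [IsGalois Φ F] (m : ℕ) (hm : Module.finrank Φ F = m) (hmdvd : m ∣ p - 1)
    (φ : F ≃ₐ[Φ] F) (hφgen : ∀ ψ : F ≃ₐ[Φ] F, ψ ∈ Subgroup.zpowers φ)
    (s : ℕ) (hs : φ ε = ε ^ s)
    (β : F) (hβ : β ≠ 0) (hβnp : ∀ γ : F, γ ^ p ≠ β)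
    (η : L) (hη : η ^ p = algebraMap F L β)
    (hLgen : IntermediateField.adjoin F {η} = ⊤)  -- `L = Φ_p(η_p)`
    :
    (IsGalois Φ L ∧ IsCyclic (L ≃ₐ[Φ] L) ∧ Module.finrank Φ L = p * m) ↔
      ∃ γ : F, γ ≠ 0 ∧ φ β = β ^ s * γ ^ p :=
  stmt_16_general p hp ε hε m hm hmdvd φ hφgen s hs β hβ hβnp η hη hLgen
end
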